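/- arXiv:2310.02289 — 5 statements merged into one kernel-verified Lean document; each statement's English description precedes it below -/
import Mathlib

section
/- Let α be a finite subset of a linearly ordered type and let v, w ∈ α be distinct; set γ = α \ {v, w}, β₁ = α \ {v}, β₂ = α \ {w}. Then θ(α → β₁)·θ(β₁ → γ) = −θ(α → β₂)·θ(β₂ → γ): the two two-step descending paths from α to γ through the two intermediate facets have opposite signs. -/
/-- The 0-based position of `x` in the increasing enumeration of the finite set `t`. -/
def idx {V : Type*} [LinearOrder V] (t : Finset V) (x : V) : ℕ :=
  (t.sort (· ≤ ·)).idxOf x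

/-- The sign `θ(σ → σ \ {v}) = (−1)^i` of the boundary arrow removing the `i`-th vertex `v`
(in the increasing enumeration of `σ`) from the simplex `σ`. -/
def boundarySign {V : Type*} [LinearOrder V] (σ : Finset V) (v : V) : ℤ :=
  (-1) ^ idx σ v

private lemma indexOf_sorted_lt {V : Type*} [LinearOrder V] (l : List V)
    (hl : l.Pairwise (· < ·)) (x : V) (hx : x ∈ l) :
    l.idxOf x = (l.filter (fun y => decide (y < x))).length := by
  induction l with
  | nil => simp at hx
  | cons a t ih =>
    rcases List.mem_cons.mp hx with rfl | hxt
    · have h1 : ∀ y ∈ t, ¬ y < x := fun y hy => not_lt.mpr (le_of_lt (List.rel_of_pairwise_cons hl hy))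
      have h2 : t.filter (fun y => decide (y < x)) = [] :=
        List.filter_eq_nil_iff.mpr (fun y hy => by simpa using h1 y hy)
      simp [List.idxOf_cons_self, List.filter_cons, h2]
    · have hax : a < x := List.rel_of_pairwise_cons hl hxt
      have hne : x ≠ a := fun h => lt_irrefl a (h ▸ hax)
      rw [List.idxOf_cons_ne _ hax.ne, List.filter_cons_of_pos (by simpa using hax),
        ih hl.of_cons hxt, List.length_cons]

private lemma idx_eq_card_filter {V : Type*} [LinearOrder V] (t : Finset V) (x : V)
    (hx : x ∈ t) : idx t x = (t.filter (fun y => y < x)).card := by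
  rw [idx, indexOf_sorted_lt _ (Finset.sortedLT_sort t).pairwise x ((Finset.mem_sort _).mpr hx)]
  rw [((Finset.sort_perm_toList t (· ≤ ·)).filter _).length_eq]
  rw [Finset.card, Finset.filter_val, ← Multiset.coe_card, ← Multiset.filter_coe, Finset.toList,
    Multiset.coe_toList]

private lemma stmt_2_key {V : Type*} [LinearOrder V] (α : Finset V) (v w : V)
    (hv : v ∈ α) (hw : w ∈ α) (hvw : v < w) :
    boundarySign α v * boundarySign (α.erase v) w =
      -(boundarySign α w * boundarySign (α.erase w) v) := by
  have hwv : w ∈ α.erase v := Finset.mem_erase.mpr ⟨hvw.ne', hw⟩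
  have hvw' : v ∈ α.erase w := Finset.mem_erase.mpr ⟨hvw.ne, hv⟩
  have h1 : idx (α.erase v) w = idx α w - 1 := by
    rw [idx_eq_card_filter _ _ hwv, idx_eq_card_filter _ _ hw, Finset.filter_erase,
      Finset.card_erase_of_mem ((Finset.mem_filter.mpr ⟨hv, hvw⟩ : v ∈ α.filter (fun y => y < w)))]
  have h2 : idx (α.erase w) v = idx α v := by
    rw [idx_eq_card_filter _ _ hvw', idx_eq_card_filter _ _ hv, Finset.filter_erase,
      Finset.erase_eq_of_notMem (by simp [not_lt.mpr hvw.le])]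
  have h3 : 1 ≤ idx α w := by
    rw [idx_eq_card_filter _ _ hw]
    exact Finset.card_pos.mpr ⟨v, (Finset.mem_filter.mpr ⟨hv, hvw⟩ : v ∈ α.filter (fun y => y < w))⟩
  obtain ⟨k, hk⟩ : ∃ k, idx α w = k + 1 := ⟨idx α w - 1, (Nat.succ_pred_eq_of_pos h3).symm⟩
  unfold boundarySign
  rw [h1, h2, hk]
  simp [pow_succ]
  ring

/-- **The flip of the Flop.** Let `α` be a finite subset of a linearly ordered type and let
`v, w ∈ α` be distinct; set `γ = α \ {v, w}`, `β₁ = α \ {v}`, `β₂ = α \ {w}`. Then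
`θ(α → β₁)·θ(β₁ → γ) = −θ(α → β₂)·θ(β₂ → γ)`: the two two-step descending paths from `α`
to `γ` through the two intermediate facets have opposite signs. -/
theorem stmt_2 {V : Type*} [LinearOrder V] (α : Finset V) (v w : V)
    (hv : v ∈ α) (hw : w ∈ α) (hvw : v ≠ w) :
    boundarySign α v * boundarySign (α.erase v) w =
      -(boundarySign α w * boundarySign (α.erase w) v) := by
  rcases hvw.lt_or_gt with h | h
  · exact stmt_2_key α v w hv hw h
  · rw [stmt_2_key α w v hw hv h]; ring
end

section
/- Let K be an abstract simplicial complex, f a discrete Morse function on K with gradient vector field V, and let α₀, β₀, α₁, β₁, …, β_r, α_{r+1} be a sequence of simplices of K such that for each 0 ≤ i ≤ r, both αᵢ and α_{i+1} are facets of βᵢ and α_{i+1} ≠ αᵢ. Then the sequence is a V-path (i.e. (αᵢ, βᵢ) ∈ V for every 0 ≤ i ≤ r) if and only if f(α₀) ≥ f(β₀) > f(α₁) ≥ f(β₁) > ⋯ ≥ f(β_r) > f(α_{r+1}). -/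
/-- `τ` is a facet of `σ`: `τ ⊆ σ` and `|τ| = |σ| − 1`. -/
def IsFacet {V : Type*} (τ σ : Finset V) : Prop :=
  τ ⊆ σ ∧ τ.card + 1 = σ.card

/-- **Forman, Theorem 3.4.**
Let `K` be an abstract simplicial complex, `f` a discrete Morse function on `K` with
gradient vector field `V = {(σ, τ) : σ ∈ K a facet of τ ∈ K, f τ ≤ f σ}`, and let
`α₀, β₀, α₁, β₁, …, β_r, α_{r+1}` be a sequence of simplices of `K` such that for each
`0 ≤ i ≤ r` both `αᵢ` and `α_{i+1}` are facets of `βᵢ` and `α_{i+1} ≠ αᵢ`.  Then the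
sequence is a `V`-path (i.e. `(αᵢ, βᵢ) ∈ V`, that is `f (βᵢ) ≤ f (αᵢ)`, for all
`0 ≤ i ≤ r`) if and only if
`f α₀ ≥ f β₀ > f α₁ ≥ f β₁ > ⋯ ≥ f β_r > f α_{r+1}`. -/
theorem stmt_9 {W : Type*} (K : Set (Finset W))
    (hK1 : ∀ σ ∈ K, σ.Nonempty)
    (hK2 : ∀ σ ∈ K, ∀ τ, τ ⊆ σ → τ.Nonempty → τ ∈ K)
    (f : Finset W → ℝ)
    (hf1 : ∀ β ∈ K, {γ | γ ∈ K ∧ IsFacet γ β ∧ f β ≤ f γ}.Subsingleton)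
    (hf2 : ∀ β ∈ K, {α | α ∈ K ∧ IsFacet β α ∧ f α ≤ f β}.Subsingleton)
    (r : ℕ) (α β : ℕ → Finset W)
    (hαK : ∀ i ≤ r + 1, α i ∈ K) (hβK : ∀ i ≤ r, β i ∈ K)
    (hfacet : ∀ i ≤ r, IsFacet (α i) (β i))
    (hfacet' : ∀ i ≤ r, IsFacet (α (i + 1)) (β i))
    (hne : ∀ i ≤ r, α (i + 1) ≠ α i) :
    (∀ i ≤ r, f (β i) ≤ f (α i)) ↔
      (∀ i ≤ r, f (β i) ≤ f (α i) ∧ f (α (i + 1)) < f (β i)) := by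
  constructor
  · intro h i hi
    refine ⟨h i hi, ?_⟩
    by_contra hcon
    push_neg at hcon
    have := hf1 (β i) (hβK i hi)
      (show α i ∈ _ from ⟨hαK i (le_trans hi (Nat.le_succ r)), hfacet i hi, h i hi⟩)
      (show α (i+1) ∈ _ from ⟨hαK (i+1) (Nat.succ_le_succ hi), hfacet' i hi, hcon⟩)
    exact hne i hi this.symm
  · intro h i hi
    exact (h i hi).1
end

section
/- Let K be a finite abstract simplicial complex and V a discrete vector field on K. Then V is the gradient vector field of some discrete Morse function on K if and only if there are no nontrivial closed V-paths, i.e. no V-path α₀, β₀, α₁, …, β_r, α_{r+1} with α_{r+1} = α₀. -/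
/-- The "modified Hasse diagram" relation: `MR K V x y` means `f x < f y` must hold
for the Morse function we build. -/
def MR {W : Type*} (K : Finset (Finset W)) (V : Set (Finset W × Finset W))
    (x y : Finset W) : Prop :=
  x ∈ K ∧ y ∈ K ∧ ((IsFacet x y ∧ (x, y) ∉ V) ∨ (y, x) ∈ V)

theorem transGen_chain {α : Type*} {R : α → α → Prop} {x y : α}
    (h : Relation.TransGen R x y) :
    ∃ n : ℕ, ∃ g : ℕ → α, 0 < n ∧ g 0 = x ∧ g n = y ∧ ∀ i < n, R (g i) (g (i + 1)) := by
  induction h with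
  | @single b hxb =>
    refine ⟨1, fun i => if i = 0 then x else b, one_pos, by simp, by simp, ?_⟩
    intro i hi
    interval_cases i
    simpa using hxb
  | @tail b c hxb hbc ih =>
    obtain ⟨n, g, hn, h0, hnb, hstep⟩ := ih
    refine ⟨n + 1, fun i => if i ≤ n then g i else c, by omega, by simp [h0], ?_, ?_⟩
    · simp
    · intro i hi
      rcases Nat.lt_or_ge i n with h | h
      · have hi1 : i ≤ n := by omega
        have hi2 : i + 1 ≤ n := by omega
        simp only [if_pos hi1, if_pos hi2]
        exact hstep i h
      · have hieq : i = n := by omega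
        subst hieq
        simp only [le_refl, if_pos, if_neg (by omega : ¬ i + 1 ≤ i)]
        rw [hnb]; exact hbc

theorem mod_succ_cases (i n : ℕ) (hn : 0 < n) :
    (i + 1) % n = i % n + 1 ∨ (i % n + 1 = n ∧ (i + 1) % n = 0) := by
  rcases Nat.lt_or_ge (i % n + 1) n with h | h
  · left
    conv_lhs => rw [← Nat.div_add_mod i n]
    rw [Nat.add_assoc, Nat.mul_add_mod, Nat.mod_eq_of_lt h]
  · right
    have hlt := Nat.mod_lt i hn
    have he : i % n + 1 = n := by omega
    refine ⟨he, ?_⟩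
    conv_lhs => rw [← Nat.div_add_mod i n]
    rw [Nat.add_assoc, Nat.mul_add_mod, he, Nat.mod_self]

/-- If there are no closed `V`-paths, then the modified Hasse diagram is acyclic. -/
theorem no_cycle {W : Type*} (K : Finset (Finset W)) (V : Set (Finset W × Finset W))
    (hV1 : ∀ p ∈ V, p.1 ∈ K ∧ p.2 ∈ K ∧ IsFacet p.1 p.2)
    (hV2 : ∀ σ ∈ K, {p | p ∈ V ∧ (p.1 = σ ∨ p.2 = σ)}.Subsingleton)
    (hnp : ¬ ∃ (r : ℕ) (α β : ℕ → Finset W),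
          (∀ i ≤ r, (α i, β i) ∈ V ∧ IsFacet (α (i + 1)) (β i) ∧ α (i + 1) ≠ α i) ∧
          α (r + 1) = α 0) :
    ∀ x, ¬ Relation.TransGen (MR K V) x x := by
  intro x hx
  obtain ⟨n, g, hn, h0, hnx, hstep⟩ := transGen_chain hx
  set G : ℕ → Finset W := fun i => g (i % n) with hG
  have hGR : ∀ i, MR K V (G i) (G (i + 1)) := by
    intro i
    have hlt : i % n < n := Nat.mod_lt i hn
    have hs := hstep _ hlt
    rcases mod_succ_cases i n hn with h | ⟨h1, h2⟩
    · show MR K V (g (i % n)) (g ((i + 1) % n))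
      rw [h]; exact hs
    · show MR K V (g (i % n)) (g ((i + 1) % n))
      rw [h2, h0, ← hnx, show g n = g (i % n + 1) from congrArg g h1.symm]
      exact hs
  set d : ℕ := (Finset.range n).sup (fun i => (g i).card) with hd
  have hbd : ∀ i, (G i).card ≤ d :=
    fun i => Finset.le_sup (f := fun i => (g i).card) (Finset.mem_range.mpr (Nat.mod_lt i hn))
  obtain ⟨i₀, hi₀mem, hi₀⟩ :=
    Finset.exists_mem_eq_sup (Finset.range n) ⟨0, Finset.mem_range.mpr hn⟩
      (fun i => (g i).card)
  have hGi₀ : (G i₀).card = d := by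
    show (g (i₀ % n)).card = d
    rw [Nat.mod_eq_of_lt (Finset.mem_range.mp hi₀mem), ← hi₀]
  have step : ∀ i, (G i).card = d →
      (G (i + 1), G i) ∈ V ∧ (G (i + 2)).card = d ∧
      IsFacet (G (i + 1)) (G (i + 2)) ∧ (G (i + 1), G (i + 2)) ∉ V := by
    intro i hcard
    obtain ⟨h1K, h2K, hcase⟩ := hGR i
    have hVpair : (G (i + 1), G i) ∈ V := by
      rcases hcase with ⟨hfac, -⟩ | hv
      · exfalso; have hb := hbd (i + 1); have := hfac.2; omega
      · exact hv
    have hfac1 : IsFacet (G (i + 1)) (G i) := (hV1 _ hVpair).2.2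
    obtain ⟨h1K', h2K', hcase'⟩ := hGR (i + 1)
    rcases hcase' with ⟨hfac2, hnv⟩ | hv'
    · refine ⟨hVpair, ?_, hfac2, hnv⟩
      have e22 : (G (i + 1 + 1)).card = (G (i + 2)).card := rfl
      have := hfac1.2; have := hfac2.2; omega
    · exfalso
      have e := hV2 (G (i + 1)) h1K' ⟨hVpair, Or.inl rfl⟩ ⟨hv', Or.inr rfl⟩
      have e2 : G i = G (i + 1) := congrArg Prod.snd e
      have e3 : (G i).card = (G (i + 1)).card := by rw [e2]
      have := hfac1.2
      omega
  have all : ∀ k, (G (i₀ + 2 * k)).card = d := by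
    intro k
    induction k with
    | zero => simpa using hGi₀
    | succ k ih =>
      have h2 := (step _ ih).2.1
      have he : i₀ + 2 * (k + 1) = i₀ + 2 * k + 2 := by ring
      rw [he]; exact h2
  apply hnp
  refine ⟨n - 1, fun j => G (i₀ + 2 * (n - j) + 1), fun j => G (i₀ + 2 * (n - j)), ?_, ?_⟩
  · intro j hj
    set m := n - (j + 1) with hmdef
    have s1 := step (i₀ + 2 * m) (all m)
    have s2 := step (i₀ + 2 * m + 2) (by
      have he : i₀ + 2 * m + 2 = i₀ + 2 * (m + 1) := by ring
      rw [he]; exact all (m + 1))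
    have e1 : i₀ + 2 * (n - j) + 1 = i₀ + 2 * m + 2 + 1 := by omega
    have e2 : i₀ + 2 * (n - j) = i₀ + 2 * m + 2 := by omega
    have e3 : i₀ + 2 * (n - (j + 1)) + 1 = i₀ + 2 * m + 1 := by omega
    dsimp only
    rw [e1, e2, e3]
    refine ⟨s2.1, s1.2.2.1, ?_⟩
    intro hEq
    exact s1.2.2.2 (by rw [hEq]; exact s2.1)
  · dsimp only
    have e4 : n - (n - 1 + 1) = 0 := by omega
    rw [e4]
    show g ((i₀ + 2 * 0 + 1) % n) = g ((i₀ + 2 * (n - 0) + 1) % n)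
    congr 1
    rw [show i₀ + 2 * 0 + 1 = i₀ + 1 from by ring,
        show i₀ + 2 * (n - 0) + 1 = (i₀ + 1) + 2 * n from by omega,
        Nat.add_mul_mod_self_right]

/-- **Forman, Theorem 3.5.**
Let `K` be a finite abstract simplicial complex and `V` a discrete vector field on `K`
(a set of pairs `(σ, τ)` of simplices of `K` with `σ` a facet of `τ`, such that each
simplex of `K` belongs to at most one pair of `V`).  Then `V` is the gradient vector field
of some discrete Morse function on `K` if and only if there are no nontrivial closed
`V`-paths, i.e. no `V`-path `α₀, β₀, α₁, …, β_r, α_{r+1}` with `α_{r+1} = α₀`. -/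
theorem stmt_10 {W : Type*} (K : Finset (Finset W))
    (hK1 : ∀ σ ∈ K, σ.Nonempty)
    (hK2 : ∀ σ ∈ K, ∀ τ, τ ⊆ σ → τ.Nonempty → τ ∈ K)
    (V : Set (Finset W × Finset W))
    (hV1 : ∀ p ∈ V, p.1 ∈ K ∧ p.2 ∈ K ∧ IsFacet p.1 p.2)
    (hV2 : ∀ σ ∈ K, {p | p ∈ V ∧ (p.1 = σ ∨ p.2 = σ)}.Subsingleton) :
    (∃ f : Finset W → ℝ,
        (∀ β ∈ K, {γ | γ ∈ K ∧ IsFacet γ β ∧ f β ≤ f γ}.Subsingleton) ∧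
        (∀ β ∈ K, {α | α ∈ K ∧ IsFacet β α ∧ f α ≤ f β}.Subsingleton) ∧
        V = {p | p.1 ∈ K ∧ p.2 ∈ K ∧ IsFacet p.1 p.2 ∧ f p.2 ≤ f p.1}) ↔
      ¬ ∃ (r : ℕ) (α β : ℕ → Finset W),
          (∀ i ≤ r, (α i, β i) ∈ V ∧ IsFacet (α (i + 1)) (β i) ∧ α (i + 1) ≠ α i) ∧
          α (r + 1) = α 0 := by
  classical
  constructor
  · rintro ⟨f, hf1, hf2, hfV⟩ ⟨r, α, β, hpath, hclose⟩
    have key : ∀ i ≤ r, f (α (i + 1)) < f (α i) := by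
      intro i hi
      obtain ⟨hV, hfacet, hne⟩ := hpath i hi
      rw [hfV] at hV
      have hV' : α i ∈ K ∧ β i ∈ K ∧ IsFacet (α i) (β i) ∧ f (β i) ≤ f (α i) := hV
      obtain ⟨hαK, hβK, hαβ, hle⟩ := hV'
      have hα1K : α (i + 1) ∈ K := by
        apply hK2 (β i) hβK _ hfacet.1
        have h1 := hK1 (α i) hαK
        rw [← Finset.card_pos] at h1 ⊢
        have := hfacet.2; have := hαβ.2
        omega
      by_contra hnot
      push_neg at hnot
      have hmem1 : α i ∈ {γ | γ ∈ K ∧ IsFacet γ (β i) ∧ f (β i) ≤ f γ} := ⟨hαK, hαβ, hle⟩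
      have hmem2 : α (i + 1) ∈ {γ | γ ∈ K ∧ IsFacet γ (β i) ∧ f (β i) ≤ f γ} :=
        ⟨hα1K, hfacet, le_trans hle hnot⟩
      exact hne ((hf1 (β i) hβK hmem1 hmem2).symm)
    have mono : ∀ i ≤ r + 1, f (α i) ≤ f (α 0) := by
      intro i
      induction i with
      | zero => intro _; exact le_refl _
      | succ i ih =>
        intro hi
        have h1 := key i (by omega)
        have h2 := ih (by omega)
        linarith
    have h1 : f (α (r + 1)) < f (α 0) :=
      lt_of_lt_of_le (key r le_rfl) (mono r (by omega))
    rw [hclose] at h1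
    exact absurd h1 (lt_irrefl _)
  · intro hnp
    have acyc := no_cycle K V hV1 hV2 hnp
    set f : Finset W → ℝ :=
      fun x => ((K.filter (fun y => Relation.TransGen (MR K V) y x)).card : ℝ) with hf
    have hmono : ∀ x y, MR K V x y → f x < f y := by
      intro x y hxy
      have hss : K.filter (fun z => Relation.TransGen (MR K V) z x) ⊂
          K.filter (fun z => Relation.TransGen (MR K V) z y) := by
        constructor
        · intro z hz
          simp only [Finset.mem_filter] at hz ⊢
          exact ⟨hz.1, hz.2.tail hxy⟩
        · intro hsub
          have hx : x ∈ K.filter (fun z => Relation.TransGen (MR K V) z y) :=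
            Finset.mem_filter.mpr ⟨hxy.1, Relation.TransGen.single hxy⟩
          have := Finset.mem_filter.mp (hsub hx)
          exact acyc x this.2
      simp only [hf]
      exact_mod_cast Finset.card_lt_card hss
    refine ⟨f, ?_, ?_, ?_⟩
    · intro b hb
      have keyb : ∀ γ, γ ∈ K → IsFacet γ b → f b ≤ f γ → (γ, b) ∈ V := by
        intro γ hγK hfac hle
        by_contra hnv
        exact absurd (hmono γ b ⟨hγK, hb, Or.inl ⟨hfac, hnv⟩⟩) (not_lt.mpr hle)
      intro x hx y hy
      obtain ⟨hxK, hxf, hxl⟩ := hx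
      obtain ⟨hyK, hyf, hyl⟩ := hy
      have e := hV2 b hb ⟨keyb x hxK hxf hxl, Or.inr rfl⟩ ⟨keyb y hyK hyf hyl, Or.inr rfl⟩
      exact congrArg Prod.fst e
    · intro b hb
      have keyb : ∀ a, a ∈ K → IsFacet b a → f a ≤ f b → (b, a) ∈ V := by
        intro a haK hfac hle
        by_contra hnv
        exact absurd (hmono b a ⟨hb, haK, Or.inl ⟨hfac, hnv⟩⟩) (not_lt.mpr hle)
      intro x hx y hy
      obtain ⟨hxK, hxf, hxl⟩ := hx
      obtain ⟨hyK, hyf, hyl⟩ := hy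
      have e := hV2 b hb ⟨keyb x hxK hxf hxl, Or.inl rfl⟩ ⟨keyb y hyK hyf hyl, Or.inl rfl⟩
      exact congrArg Prod.snd e
    · ext p
      constructor
      · intro hp
        obtain ⟨h1, h2, h3⟩ := hV1 p hp
        exact ⟨h1, h2, h3, le_of_lt (hmono p.2 p.1 ⟨h2, h1, Or.inr (by simpa using hp)⟩)⟩
      · rintro ⟨h1, h2, h3, h4⟩
        by_contra hnv
        have := hmono p.1 p.2 ⟨h1, h2, Or.inl ⟨h3, by simpa using hnv⟩⟩
        linarith
end

section
/- Let K be a finite abstract simplicial complex with discrete Morse function f and gradient vector field V, and let α and γ be critical simplices of K of dimensions p+1 and p−1. Then ∑_β #M(α, β) · #M(β, γ) = 0, the sum running over all critical p-simplices β of K. Equivalently, the discrete Morse differential ∂̃, defined on a critical simplex α by ∂̃(α) = ∑_{β critical, dim β = dim α − 1} #M(α, β)·β, satisfies ⟨∂̃²(α), γ⟩ = 0 for all critical α, γ, i.e. ∂̃² = 0. -/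
/-- The sign of the boundary arrow from a simplex `σ` to a facet `τ`: if `τ = σ \ {v}`
where `v` is the `i`-th vertex in the increasing enumeration of `σ`, this is `(−1)^i`.
(The upward Morse arrow from `τ` to `σ` carries the same sign.) -/
def arrowSign {V : Type*} [LinearOrder V] (σ τ : Finset V) : ℤ :=
  ∑ v ∈ σ \ τ, (-1 : ℤ) ^ idx σ v

/-- A simplex `β` of `K` is critical for `f`: every facet of `β` in `K` has strictly
smaller `f`-value and every cofacet of `β` in `K` has strictly larger `f`-value. -/
def IsCritical {W : Type*} (K : Finset (Finset W)) (f : Finset W → ℝ)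
    (β : Finset W) : Prop :=
  β ∈ K ∧ (∀ γ ∈ K, IsFacet γ β → f γ < f β) ∧ (∀ α ∈ K, IsFacet β α → f β < f α)

/-- The gradient vector field of `f` on `K`: the pairs `(τ, σ)` with `τ ∈ K` a facet of
`σ ∈ K` and `f σ ≤ f τ`. -/
def gradVF {W : Type*} (K : Finset (Finset W)) (f : Finset W → ℝ) :
    Set (Finset W × Finset W) :=
  {p | p.1 ∈ K ∧ p.2 ∈ K ∧ IsFacet p.1 p.2 ∧ f p.2 ≤ f p.1}

/-- An index-1 flowline from `σ` to `τ` along the vector field `V`: a sequence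
`σ = σ₀, τ₀, σ₁, τ₁, …, σ_r, τ_r = τ` with each `τᵢ` a facet of `σᵢ`,
`(τᵢ, σ_{i+1}) ∈ V` for `i < r`, and `τ_{i+1} ≠ τᵢ`. -/
structure Flowline1 (W : Type*) (V : Set (Finset W × Finset W)) (σ τ : Finset W) where
  r : ℕ
  s : Fin (r + 1) → Finset W
  t : Fin (r + 1) → Finset W
  hs0 : s 0 = σ
  htr : t (Fin.last r) = τ
  hfacet : ∀ i, IsFacet (t i) (s i)
  hV : ∀ i : Fin r, (t i.castSucc, s i.succ) ∈ V
  hne : ∀ i : Fin r, t i.succ ≠ t i.castSucc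

/-- The product of the signs of all arrows (downward and upward) of an index-1 flowline. -/
def flowProd {W : Type*} [LinearOrder W] {V : Set (Finset W × Finset W)}
    {σ τ : Finset W} (F : Flowline1 W V σ τ) : ℤ :=
  (∏ i : Fin (F.r + 1), arrowSign (F.s i) (F.t i)) *
    ∏ i : Fin F.r, arrowSign (F.s i.succ) (F.t i.castSucc)

/-- The sign of an index-1 flowline: the product of the signs of all its arrows times
`(−1)^r`, where `r` is the number of upward arrows. -/
def theta1 {W : Type*} [LinearOrder W] {V : Set (Finset W × Finset W)}
    {σ τ : Finset W} (F : Flowline1 W V σ τ) : ℤ :=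
  flowProd F * (-1) ^ F.r

/-- `#M(σ, τ)`: the signed count of index-1 flowlines from `σ` to `τ`. -/
noncomputable def M {W : Type*} [LinearOrder W] (V : Set (Finset W × Finset W))
    (σ τ : Finset W) : ℤ :=
  ∑ᶠ F : Flowline1 W V σ τ, theta1 F


section DMproof

theorem sort_erase {α : Type*} [LinearOrder α] (s : Finset α) (u : α) :
    (s.erase u).sort (· ≤ ·) = (s.sort (· ≤ ·)).erase u := by
  refine (fun hp h1 h2 => List.Perm.eq_of_pairwise' (r := (· ≤ ·)) h1 h2 hp) ?_ ?_ ?_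
  · apply (List.perm_ext_iff_of_nodup (Finset.sort_nodup _ _) _).mpr
    · intro x
      simp only [Finset.mem_sort, Finset.mem_erase,
        (Finset.sort_nodup s (· ≤ ·)).mem_erase_iff, Finset.mem_sort]
    · exact (Finset.sort_nodup _ _).erase u
  · exact Finset.pairwise_sort _ _
  · exact (Finset.pairwise_sort s (· ≤ ·)).sublist List.erase_sublist

theorem indexOf_erase {α : Type*} [DecidableEq α] :
    ∀ (l : List α), l.Nodup → ∀ u v, u ∈ l → v ∈ l → u ≠ v →
      (l.erase u).idxOf v =
        if l.idxOf u < l.idxOf v then l.idxOf v - 1 else l.idxOf v := by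
  intro l
  induction l with
  | nil => intro _ u v hu; simp at hu
  | cons a l ih =>
    intro hnd u v hu hv huv
    rcases List.nodup_cons.mp hnd with ⟨ha, hnd'⟩
    by_cases hau : a = u
    · subst hau
      have hv' : v ∈ l := by
        rcases List.mem_cons.mp hv with h | h
        · exact absurd h.symm huv
        · exact h
      rw [List.erase_cons_head]
      rw [List.idxOf_cons_self, List.idxOf_cons_ne l (fun h : a = v => huv h)]
      simp
    · have hu' : u ∈ l := by
        rcases List.mem_cons.mp hu with h | h
        · exact absurd h.symm (fun h2 : a = u => hau h2)
        · exact h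
      rw [List.erase_cons_tail (a := u) (b := a) (by simpa using hau)]
      by_cases hav : a = v
      · subst hav
        rw [List.idxOf_cons_self, List.idxOf_cons_self]
        simp
      · have hv' : v ∈ l := by
          rcases List.mem_cons.mp hv with h | h
          · exact absurd h.symm hav
          · exact h
        rw [List.idxOf_cons_ne l hau, List.idxOf_cons_ne l hav,
          List.idxOf_cons_ne (l.erase u) hav, ih hnd' u v hu' hv' huv]
        by_cases hlt : l.idxOf u < l.idxOf v
        · rw [if_pos hlt, if_pos (by omega)]
          omega
        · rw [if_neg hlt, if_neg (by omega)]

theorem indexOf_lt_indexOf_sorted {α : Type*} [LinearOrder α] {l : List α}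
    (hl : l.Pairwise (· < ·)) {u v : α} (hu : u ∈ l) (hv : v ∈ l) (huv : u < v) :
    l.idxOf u < l.idxOf v := by
  have hiu := List.idxOf_lt_length_iff.mpr hu
  have hiv := List.idxOf_lt_length_iff.mpr hv
  by_contra h
  push_neg at h
  rcases lt_or_eq_of_le h with h | h
  · have := hl.sortedLT.strictMono_get (show (⟨l.idxOf v, hiv⟩ : Fin l.length) < ⟨l.idxOf u, hiu⟩ from h)
    simp only [List.get_eq_getElem, List.getElem_idxOf] at this
    exact absurd (this.trans huv) (lt_irrefl _)
  · exact absurd ((List.idxOf_inj hv).mp h ▸ huv) (lt_irrefl _)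

theorem idx_lt_idx {α : Type*} [LinearOrder α] {σ : Finset α} {u v : α}
    (hu : u ∈ σ) (hv : v ∈ σ) (huv : u < v) : idx σ u < idx σ v :=
  indexOf_lt_indexOf_sorted (Finset.sortedLT_sort σ).pairwise
    ((Finset.mem_sort _).mpr hu) ((Finset.mem_sort _).mpr hv) huv

theorem idx_erase {α : Type*} [LinearOrder α] {σ : Finset α} {u v : α}
    (hu : u ∈ σ) (hv : v ∈ σ) (huv : u ≠ v) :
    idx (σ.erase u) v = if idx σ u < idx σ v then idx σ v - 1 else idx σ v := by
  unfold idx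
  rw [sort_erase]
  exact indexOf_erase _ (Finset.sort_nodup _ _) u v
    ((Finset.mem_sort _).mpr hu) ((Finset.mem_sort _).mpr hv) huv

theorem sdiff_erase_singleton {α : Type*} [DecidableEq α] {σ : Finset α} {v : α} (hv : v ∈ σ) :
    σ \ σ.erase v = {v} := by
  ext x
  simp only [Finset.mem_sdiff, Finset.mem_erase, Finset.mem_singleton]
  constructor
  · rintro ⟨hx, h⟩
    by_contra hne
    exact h ⟨hne, hx⟩
  · rintro rfl
    exact ⟨hv, fun h => h.1 rfl⟩

theorem arrowSign_erase {α : Type*} [LinearOrder α] {σ : Finset α} {v : α} (hv : v ∈ σ) :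
    arrowSign σ (σ.erase v) = (-1) ^ idx σ v := by
  unfold arrowSign
  rw [sdiff_erase_singleton hv, Finset.sum_singleton]

/-- the key cancellation: removing u,v in either order gives opposite signs -/
theorem sign_cancel_dir {α : Type*} [LinearOrder α] {σ : Finset α} {u v : α}
    (hu : u ∈ σ) (hv : v ∈ σ) (huv : u < v) :
    arrowSign σ (σ.erase u) * arrowSign (σ.erase u) ((σ.erase u).erase v)
      + arrowSign σ (σ.erase v) * arrowSign (σ.erase v) ((σ.erase v).erase u) = 0 := by
  have hvu : v ∈ σ.erase u := Finset.mem_erase.mpr ⟨(ne_of_lt huv).symm, hv⟩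
  have huv' : u ∈ σ.erase v := Finset.mem_erase.mpr ⟨ne_of_lt huv, hu⟩
  rw [arrowSign_erase hu, arrowSign_erase hv, arrowSign_erase hvu, arrowSign_erase huv']
  have h1 : idx σ u < idx σ v := idx_lt_idx hu hv huv
  rw [idx_erase hu hv (ne_of_lt huv), if_pos h1,
      idx_erase hv hu (ne_of_lt huv).symm, if_neg (by omega)]
  have h2 : 1 ≤ idx σ v := by omega
  have : ((-1 : ℤ)) ^ idx σ v = (-1) ^ (idx σ v - 1) * (-1) := by
    rw [← pow_succ]
    congr 1
    omega
  rw [this]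
  ring


section FacetLemmas
variable {α : Type*} [LinearOrder α]

theorem IsFacet.exists_erase {τ σ : Finset α} (h : IsFacet τ σ) :
    ∃ v, v ∈ σ ∧ v ∉ τ ∧ τ = σ.erase v := by
  have hd : (σ \ τ).card = 1 := by
    have hc := h.2
    rw [Finset.card_sdiff_of_subset h.1]; omega
  obtain ⟨v, hv⟩ := Finset.card_eq_one.mp hd
  have hvσ : v ∈ σ := by
    have : v ∈ σ \ τ := hv ▸ Finset.mem_singleton_self v
    exact (Finset.mem_sdiff.mp this).1
  have hvτ : v ∉ τ := by
    have : v ∈ σ \ τ := hv ▸ Finset.mem_singleton_self v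
    exact (Finset.mem_sdiff.mp this).2
  refine ⟨v, hvσ, hvτ, ?_⟩
  have : τ = σ \ (σ \ τ) := (Finset.sdiff_sdiff_eq_self h.1).symm
  rw [this, hv, ← Finset.erase_eq]

theorem IsFacet.erase {σ : Finset α} {v : α} (hv : v ∈ σ) : IsFacet (σ.erase v) σ :=
  ⟨Finset.erase_subset _ _, by rw [Finset.card_erase_of_mem hv]; have := Finset.card_pos.mpr ⟨v, hv⟩; omega⟩

theorem arrowSign_sq {τ σ : Finset α} (h : IsFacet τ σ) :
    arrowSign σ τ * arrowSign σ τ = 1 := by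
  obtain ⟨v, hv, -, rfl⟩ := h.exists_erase
  rw [arrowSign_erase hv, ← pow_add]
  exact Even.neg_one_pow ⟨idx σ v, rfl⟩



end FacetLemmas

theorem mat_nilpotent {ι : Type*} [Fintype ι] [DecidableEq ι]
    (A : Matrix ι ι ℤ) (g : ι → ℝ) (hA : ∀ i j, A i j ≠ 0 → g j < g i) :
    A ^ Fintype.card ι = 0 := by
  have key : ∀ k i j, (A ^ k) i j ≠ 0 →
      ∃ c : Fin (k + 1) → ι, c 0 = i ∧ StrictAnti (g ∘ c) := by
    intro k
    induction k with
    | zero =>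
      intro i j h
      refine ⟨fun _ => i, rfl, ?_⟩
      intro a b hab
      exfalso
      have ha := a.2; have hb := b.2
      rw [Fin.lt_def] at hab
      omega
    | succ k ih =>
      intro i j h
      rw [pow_succ', Matrix.mul_apply] at h
      obtain ⟨m, -, hm⟩ := Finset.exists_ne_zero_of_sum_ne_zero h
      have h1 : A i m ≠ 0 := fun h0 => hm (by rw [h0, zero_mul])
      have h2 : (A ^ k) m j ≠ 0 := fun h0 => hm (by rw [h0, mul_zero])
      obtain ⟨c, hc0, hca⟩ := ih m j h2
      refine ⟨Fin.cons i c, rfl, ?_⟩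
      rw [Fin.strictAnti_iff_succ_lt]
      intro a
      refine Fin.cases ?_ ?_ a
      · show (g ∘ Fin.cons i c) (Fin.succ 0) < (g ∘ Fin.cons i c) (Fin.castSucc 0)
        simp only [Function.comp_apply, Fin.cons_succ, Fin.castSucc_zero, Fin.cons_zero, hc0]
        exact hA i m h1
      · intro b
        show (g ∘ Fin.cons i c) b.succ.succ < (g ∘ Fin.cons i c) b.succ.castSucc
        simp only [Function.comp_apply, Fin.cons_succ, ← Fin.succ_castSucc]
        exact (Fin.strictAnti_iff_succ_lt.mp hca) b
  ext i j
  by_contra h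
  obtain ⟨c, -, hca⟩ := key _ i j (by simpa using h)
  have hinj : Function.Injective c := fun a b hab => by
    by_contra hne
    rcases lt_or_gt_of_ne hne with hl | hl
    · exact absurd (congrArg g hab) (ne_of_gt (hca hl))
    · exact absurd (congrArg g hab) (ne_of_lt (hca hl))
  have := Fintype.card_le_of_injective c hinj
  simp at this


open scoped Classical

noncomputable section DM2
variable {W : Type*} [LinearOrder W]
abbrev dmI (K : Finset (Finset W)) := {x : Finset W // x ∈ K}
variable (K : Finset (Finset W)) (f : Finset W → ℝ)

def dmD : Matrix (dmI K) (dmI K) ℤ :=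
  fun s t => if IsFacet t.1 s.1 then arrowSign s.1 t.1 else 0
def dmU : Matrix (dmI K) (dmI K) ℤ :=
  fun t s => if (t.1, s.1) ∈ gradVF K f then -arrowSign s.1 t.1 else 0
def dmW : Matrix (dmI K) (dmI K) ℤ :=
  fun s t => if (t.1, s.1) ∈ gradVF K f then -arrowSign s.1 t.1 else 0
def dmjb : dmI K → ℤ := fun t => if ∃ s : Finset W, (t.1, s) ∈ gradVF K f then 1 else 0
def dmjt : dmI K → ℤ := fun s => if ∃ t : Finset W, (t, s.1) ∈ gradVF K f then 1 else 0
def dmJb : Matrix (dmI K) (dmI K) ℤ := Matrix.diagonal (dmjb K f)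
def dmJt : Matrix (dmI K) (dmI K) ℤ := Matrix.diagonal (dmjt K f)
def dmP : Matrix (dmI K) (dmI K) ℤ := dmU K f * dmD K + dmJb K f
def dmN : Matrix (dmI K) (dmI K) ℤ :=
  ∑ k ∈ Finset.range (Fintype.card (dmI K)), dmP K f ^ k

variable {K f}

theorem dm_top_unique (hf2 : ∀ β ∈ K, {α | α ∈ K ∧ IsFacet β α ∧ f α ≤ f β}.Subsingleton)
    {τ s s' : Finset W} (h : (τ, s) ∈ gradVF K f)
    (h' : (τ, s') ∈ gradVF K f) : s = s' :=
  hf2 τ h.1 ⟨h.2.1, h.2.2.1, h.2.2.2⟩ ⟨h'.2.1, h'.2.2.1, h'.2.2.2⟩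

theorem dm_bot_unique (hf1 : ∀ β ∈ K, {γ | γ ∈ K ∧ IsFacet γ β ∧ f β ≤ f γ}.Subsingleton)
    {τ τ' s : Finset W} (h : (τ, s) ∈ gradVF K f)
    (h' : (τ', s) ∈ gradVF K f) : τ = τ' :=
  hf1 s h.2.1 ⟨h.1, h.2.2.1, h.2.2.2⟩ ⟨h'.1, h'.2.2.1, h'.2.2.2⟩

theorem dm_P_step (hf2 : ∀ β ∈ K, {α | α ∈ K ∧ IsFacet β α ∧ f α ≤ f β}.Subsingleton)
    {t t' : dmI K} {s : Finset W} (hV : (t.1, s) ∈ gradVF K f)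
    (hfc : IsFacet t'.1 s) (hne : t' ≠ t) :
    dmP K f t t' = -(arrowSign s t.1 * arrowSign s t'.1) := by
  have hsK : s ∈ K := hV.2.1
  rw [dmP, Matrix.add_apply, dmJb, Matrix.diagonal_apply_ne _ hne.symm, add_zero,
    Matrix.mul_apply]
  rw [Finset.sum_eq_single (⟨s, hsK⟩ : dmI K)]
  · rw [dmU, dmD, if_pos hV, if_pos hfc]
    ring
  · intro b _ hb'
    rw [dmU]
    by_cases hVb : (t.1, b.1) ∈ gradVF K f
    · exact absurd (Subtype.ext (dm_top_unique hf2 hVb hV)) hb'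
    · rw [if_neg hVb, zero_mul]
  · intro h
    exact absurd (Finset.mem_univ _) h

theorem dm_P_diag (hf2 : ∀ β ∈ K, {α | α ∈ K ∧ IsFacet β α ∧ f α ≤ f β}.Subsingleton)
    (t : dmI K) : dmP K f t t = 0 := by
  rw [dmP, Matrix.add_apply, dmJb, Matrix.diagonal_apply_eq]
  by_cases hb : ∃ s : Finset W, (t.1, s) ∈ gradVF K f
  · obtain ⟨s, hs⟩ := hb
    have hsK : s ∈ K := hs.2.1
    rw [Matrix.mul_apply]
    rw [Finset.sum_eq_single (⟨s, hsK⟩ : dmI K)]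
    · rw [dmU, dmD, if_pos hs, if_pos hs.2.2.1, dmjb, if_pos ⟨s, hs⟩]
      have := arrowSign_sq hs.2.2.1
      ring_nf
      linarith [arrowSign_sq hs.2.2.1]
    · intro b _ hb'
      rw [dmU]
      by_cases hVb : (t.1, b.1) ∈ gradVF K f
      · exact absurd (Subtype.ext (dm_top_unique hf2 hVb hs)) hb'
      · rw [if_neg hVb, zero_mul]
    · intro h
      exact absurd (Finset.mem_univ _) h
  · have h0 : ∀ b : dmI K, dmU K f t b * dmD K b t = 0 := by
      intro b
      rw [dmU, if_neg (fun h => hb ⟨b.1, h⟩), zero_mul]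
    rw [Matrix.mul_apply]
    simp only [h0, Finset.sum_const_zero, dmjb, if_neg hb, add_zero]


set_option linter.unusedSectionVars false in
theorem dm_DD (hK1 : ∀ σ ∈ K, σ.Nonempty)
    (hK2 : ∀ σ ∈ K, ∀ τ, τ ⊆ σ → τ.Nonempty → τ ∈ K) :
    dmD K (W := W) * dmD K = 0 := by
  ext σ ρ
  rw [Matrix.mul_apply, Matrix.zero_apply]
  by_cases hsub : ρ.1 ⊆ σ.1 ∧ ρ.1.card + 2 = σ.1.card
  · obtain ⟨hρσ, hcard⟩ := hsub
    have hd2 : (σ.1 \ ρ.1).card = 2 := by rw [Finset.card_sdiff_of_subset hρσ]; omega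
    obtain ⟨u, v, huv, hduv⟩ := Finset.card_eq_two.mp hd2
    have hu : u ∈ σ.1 ∧ u ∉ ρ.1 := by
      have : u ∈ σ.1 \ ρ.1 := hduv ▸ by simp
      exact Finset.mem_sdiff.mp this
    have hv : v ∈ σ.1 ∧ v ∉ ρ.1 := by
      have : v ∈ σ.1 \ ρ.1 := hduv ▸ by simp
      exact Finset.mem_sdiff.mp this
    have hρ : ρ.1 = σ.1 \ {u, v} := by
      rw [← hduv, Finset.sdiff_sdiff_eq_self hρσ]
    have hρeu : ρ.1 = (σ.1.erase u).erase v := by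
      rw [hρ]
      rw [show ({u, v} : Finset W) = insert v {u} by
        ext x; simp [or_comm]]
      rw [Finset.sdiff_insert, ← Finset.erase_eq]
    have hρev : ρ.1 = (σ.1.erase v).erase u := by
      rw [hρ, show ({u, v} : Finset W) = insert u {v} from rfl,
        Finset.sdiff_insert, ← Finset.erase_eq]
    have hρne : ρ.1.Nonempty := hK1 _ ρ.2
    have ht1K : σ.1.erase u ∈ K := by
      refine hK2 _ σ.2 _ (Finset.erase_subset _ _) ?_
      exact hρne.mono (hρeu ▸ Finset.erase_subset _ _)
    have ht2K : σ.1.erase v ∈ K := by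
      refine hK2 _ σ.2 _ (Finset.erase_subset _ _) ?_
      exact hρne.mono (hρev ▸ Finset.erase_subset _ _)
    set t1 : dmI K := ⟨σ.1.erase u, ht1K⟩
    set t2 : dmI K := ⟨σ.1.erase v, ht2K⟩
    have ht12 : t1 ≠ t2 := by
      intro h
      have h' : σ.1.erase u = σ.1.erase v := congrArg Subtype.val h
      have hmem : v ∈ σ.1.erase u := Finset.mem_erase.mpr ⟨huv.symm, hv.1⟩
      rw [h'] at hmem
      exact (Finset.mem_erase.mp hmem).1 rfl
    have hvanish : ∀ τ ∈ (Finset.univ : Finset (dmI K)), τ ∉ ({t1, t2} : Finset (dmI K)) →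
        dmD K σ τ * dmD K τ ρ = 0 := by
      intro τ _ hτ
      by_cases h1 : IsFacet τ.1 σ.1
      · by_cases h2 : IsFacet ρ.1 τ.1
        · exfalso
          have hτρ : (τ.1 \ ρ.1).card = 1 := by
            rw [Finset.card_sdiff_of_subset h2.1]
            have e1 := h1.2; have e2 := h2.2; omega
          obtain ⟨w, hw⟩ := Finset.card_eq_one.mp hτρ
          have hτw : τ.1 = ρ.1 ∪ {w} := by
            rw [← hw]
            rw [Finset.union_comm, Finset.sdiff_union_of_subset h2.1]
          have hwuv : w ∈ ({u, v} : Finset W) := by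
            have hwτ : w ∈ τ.1 \ ρ.1 := hw ▸ by simp
            have : w ∈ σ.1 \ ρ.1 := Finset.mem_sdiff.mpr
              ⟨h1.1 (Finset.mem_sdiff.mp hwτ).1, (Finset.mem_sdiff.mp hwτ).2⟩
            rwa [hduv] at this
          have key : ∀ a b : W, a ≠ b → ({a, b} : Finset W) = {u,v} → a ∈ σ.1 →
              ρ.1 ∪ {a} = σ.1.erase b := by
            intro a b hab habuv haσ
            rw [hρ, ← habuv]
            ext x
            simp only [Finset.mem_union, Finset.mem_sdiff, Finset.mem_insert,
              Finset.mem_singleton, Finset.mem_erase]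
            constructor
            · rintro (⟨hxσ, hx⟩ | rfl)
              · exact ⟨fun h => hx (Or.inr h), hxσ⟩
              · exact ⟨hab, haσ⟩
            · rintro ⟨hxb, hxσ⟩
              by_cases hxa : x = a
              · exact Or.inr hxa
              · exact Or.inl ⟨hxσ, by rintro (h | h) <;> [exact hxa h; exact hxb h]⟩
          rcases Finset.mem_insert.mp hwuv with rfl | hwv
          · -- w = u, τ = σ.erase v = t2
            have hτ2 : τ.1 = σ.1.erase v := by
              rw [hτw]; exact key w v huv rfl hu.1
            exact hτ (Finset.mem_insert.mpr (Or.inr (Finset.mem_singleton.mpr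
              (Subtype.ext hτ2))))
          · -- w = v
            have hwv' : w = v := Finset.mem_singleton.mp hwv
            subst hwv'
            have hτ1 : τ.1 = σ.1.erase u := by
              rw [hτw]
              exact key w u (fun h => huv h.symm) (Finset.pair_comm w u) hv.1
            exact hτ (Finset.mem_insert.mpr (Or.inl (Subtype.ext hτ1)))
        · simp [dmD, h2]
      · simp [dmD, h1]
    rw [← Finset.sum_subset (Finset.subset_univ ({t1, t2} : Finset (dmI K))) hvanish]
    rw [Finset.sum_pair ht12]
    have hf1 : IsFacet t1.1 σ.1 := IsFacet.erase hu.1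
    have hf2 : IsFacet t2.1 σ.1 := IsFacet.erase hv.1
    have hg1 : IsFacet ρ.1 t1.1 := by
      rw [hρeu]; exact IsFacet.erase (Finset.mem_erase.mpr ⟨huv.symm, hv.1⟩)
    have hg2 : IsFacet ρ.1 t2.1 := by
      rw [hρev]; exact IsFacet.erase (Finset.mem_erase.mpr ⟨huv, hu.1⟩)
    simp only [dmD, if_pos hf1, if_pos hf2, if_pos hg1, if_pos hg2]
    rcases huv.lt_or_gt with hlt | hlt
    · have h0 := sign_cancel_dir hu.1 hv.1 hlt
      rw [← hρeu, ← hρev] at h0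
      exact h0
    · have h0 := sign_cancel_dir hv.1 hu.1 hlt
      rw [← hρeu, ← hρev] at h0
      linarith
  · have : ∀ τ : dmI K, dmD K σ τ * dmD K τ ρ = 0 := by
      intro τ
      by_cases h1 : IsFacet τ.1 σ.1
      · by_cases h2 : IsFacet ρ.1 τ.1
        · exact absurd ⟨h2.1.trans h1.1, by
            have e1 := h1.2; have e2 := h2.2; omega⟩ hsub
        · simp [dmD, h2]
      · simp [dmD, h1]
    simp only [this, Finset.sum_const_zero]


end DM2

section More
variable {W : Type*} [LinearOrder W] {K : Finset (Finset W)} {f : Finset W → ℝ}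

set_option linter.unusedSectionVars false

theorem dm_UD_struct {t t' : dmI K} (h : (dmU K f * dmD K) t t' ≠ 0) :
    ∃ s : Finset W, (t.1, s) ∈ gradVF K f ∧ IsFacet t'.1 s := by
  rw [Matrix.mul_apply] at h
  obtain ⟨b, -, hb⟩ := Finset.exists_ne_zero_of_sum_ne_zero h
  refine ⟨b.1, ?_, ?_⟩
  · by_contra hV
    rw [dmU, if_neg hV, zero_mul] at hb
    exact hb rfl
  · by_contra hfc
    rw [dmD, if_neg hfc, mul_zero] at hb
    exact hb rfl

theorem dm_P_lt (hf1 : ∀ β ∈ K, {γ | γ ∈ K ∧ IsFacet γ β ∧ f β ≤ f γ}.Subsingleton)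
    (hf2 : ∀ β ∈ K, {α | α ∈ K ∧ IsFacet β α ∧ f α ≤ f β}.Subsingleton)
    {t t' : dmI K} (h : dmP K f t t' ≠ 0) : f t'.1 < f t.1 := by
  have hne : t ≠ t' := by
    rintro rfl
    exact h (dm_P_diag hf2 t)
  have hUD : (dmU K f * dmD K) t t' ≠ 0 := by
    intro h0
    rw [dmP, Matrix.add_apply, h0, zero_add, dmJb,
      Matrix.diagonal_apply_ne _ hne] at h
    exact h rfl
  obtain ⟨s, hV, hfc⟩ := dm_UD_struct hUD
  have hVle : f s ≤ f t.1 := hV.2.2.2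
  have h1 : f t'.1 < f s := by
    by_contra hle
    push_neg at hle
    have heq : t.1 = t'.1 := hf1 s hV.2.1
      ⟨hV.1, hV.2.2.1, hV.2.2.2⟩ ⟨t'.2, hfc, hle⟩
    exact hne (Subtype.ext heq)
  exact lt_of_lt_of_le h1 hVle

theorem dm_P_card {t t' : dmI K} (h : dmP K f t t' ≠ 0) : t'.1.card = t.1.card := by
  by_cases hne : t = t'
  · rw [hne]
  · have hUD : (dmU K f * dmD K) t t' ≠ 0 := by
      intro h0
      rw [dmP, Matrix.add_apply, h0, zero_add, dmJb,
        Matrix.diagonal_apply_ne _ hne] at h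
      exact h rfl
    obtain ⟨s, hV, hfc⟩ := dm_UD_struct hUD
    have e1 : t.1.card + 1 = s.card := hV.2.2.1.2
    have e2 : t'.1.card + 1 = s.card := hfc.2
    omega

theorem dm_D_card {s t : dmI K} (h : dmD K s t ≠ 0) : t.1.card + 1 = s.1.card := by
  by_cases hfc : IsFacet t.1 s.1
  · exact hfc.2
  · rw [dmD, if_neg hfc] at h
    exact absurd rfl h

theorem dm_WU (hf1 : ∀ β ∈ K, {γ | γ ∈ K ∧ IsFacet γ β ∧ f β ≤ f γ}.Subsingleton)
    (hf2 : ∀ β ∈ K, {α | α ∈ K ∧ IsFacet β α ∧ f α ≤ f β}.Subsingleton) :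
    dmW K f * dmU K f = dmJt K f := by
  ext s s'
  rw [Matrix.mul_apply, dmJt]
  by_cases hss : s = s'
  · subst hss
    rw [Matrix.diagonal_apply_eq]
    by_cases ht : ∃ t : Finset W, (t, s.1) ∈ gradVF K f
    · obtain ⟨t, hts⟩ := ht
      have htK : t ∈ K := hts.1
      rw [Finset.sum_eq_single (⟨t, htK⟩ : dmI K)]
      · have h1 : dmW K f s ⟨t, htK⟩ = -arrowSign s.1 t := by
          rw [dmW, if_pos hts]
        have h2 : dmU K f ⟨t, htK⟩ s = -arrowSign s.1 t := by
          rw [dmU, if_pos hts]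
        have h3 : dmjt K f s = 1 := by
          rw [dmjt, if_pos ⟨t, hts⟩]
        rw [h1, h2, h3, neg_mul_neg, arrowSign_sq hts.2.2.1]
      · intro b _ hb'
        by_cases hVb : (b.1, s.1) ∈ gradVF K f
        · exact absurd (Subtype.ext (dm_bot_unique hf1 hVb hts)) hb'
        · rw [dmW, if_neg hVb, zero_mul]
      · intro h
        exact absurd (Finset.mem_univ _) h
    · have h3 : dmjt K f s = 0 := by
        rw [dmjt, if_neg ht]
      rw [h3]
      refine Finset.sum_eq_zero fun b _ => ?_
      rw [dmW, if_neg (fun h => ht ⟨b.1, h⟩), zero_mul]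
  · rw [Matrix.diagonal_apply_ne _ hss]
    refine Finset.sum_eq_zero fun b _ => ?_
    by_cases h1 : (b.1, s.1) ∈ gradVF K f
    · by_cases h2 : (b.1, s'.1) ∈ gradVF K f
      · exact absurd (Subtype.ext (dm_top_unique hf2 h1 h2)) hss
      · rw [dmU, if_neg h2, mul_zero]
    · rw [dmW, if_neg h1, zero_mul]

theorem dm_WJb : dmW K f * dmJb K f = dmW K f := by
  ext s t
  rw [dmJb, Matrix.mul_diagonal]
  by_cases h : (t.1, s.1) ∈ gradVF K f
  · have : dmjb K f t = 1 := by rw [dmjb, if_pos ⟨s.1, h⟩]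
    rw [this, mul_one]
  · rw [dmW, if_neg h, zero_mul]

/-- Lemma C : no simplex is both the bottom and the top of pairs of V -/
theorem dm_exclusion
    (hK1 : ∀ σ ∈ K, σ.Nonempty)
    (hK2 : ∀ σ ∈ K, ∀ τ, τ ⊆ σ → τ.Nonempty → τ ∈ K)
    (hf1 : ∀ β ∈ K, {γ | γ ∈ K ∧ IsFacet γ β ∧ f β ≤ f γ}.Subsingleton)
    (hf2 : ∀ β ∈ K, {α | α ∈ K ∧ IsFacet β α ∧ f α ≤ f β}.Subsingleton)
    {β σ τ : Finset W} (hb : (β, σ) ∈ gradVF K f) (ht : (τ, β) ∈ gradVF K f) :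
    False := by
  obtain ⟨hβK, hσK, hβσ, hfσβ⟩ := hb
  obtain ⟨hτK, hβK', hτβ, hfβτ⟩ := ht
  have hβσ' : IsFacet β σ := hβσ
  have hτβ'' : IsFacet τ β := hτβ
  have hcβσ : β.card + 1 = σ.card := hβσ'.2
  have hcτβ : τ.card + 1 = β.card := hτβ''.2
  have hd : (β \ τ).card = 1 := by
    rw [Finset.card_sdiff_of_subset hτβ''.1]
    omega
  obtain ⟨u, hu⟩ := Finset.card_eq_one.mp hd
  have huβ : u ∈ β := (Finset.mem_sdiff.mp (hu ▸ Finset.mem_singleton_self u)).1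
  have huτ : u ∉ τ := (Finset.mem_sdiff.mp (hu ▸ Finset.mem_singleton_self u)).2
  set β' := σ.erase u with hβ'
  have huσ : u ∈ σ := hβσ'.1 huβ
  have hβ'ne : β' ≠ β := by
    intro h
    have hh : u ∉ β' := Finset.notMem_erase _ _
    rw [h] at hh
    exact hh huβ
  have hτβ' : τ ⊆ β' := fun x hx =>
    Finset.mem_erase.mpr ⟨fun h => huτ (h ▸ hx), hβσ'.1 (hτβ''.1 hx)⟩
  have hβ'K : β' ∈ K := hK2 σ hσK β' (Finset.erase_subset _ _)
    ((hK1 τ hτK).mono hτβ')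
  have hfacβ' : IsFacet β' σ := by
    refine ⟨Finset.erase_subset _ _, ?_⟩
    rw [Finset.card_erase_of_mem huσ]
    have hpos := Finset.card_pos.mpr ⟨u, huσ⟩
    omega
  have hτfacβ' : IsFacet τ β' := by
    refine ⟨hτβ', ?_⟩
    have h1 := hfacβ'.2
    omega
  by_cases hle : f σ ≤ f β'
  · exact hβ'ne (hf1 σ hσK ⟨hβ'K, hfacβ', hle⟩ ⟨hβK, hβσ, hfσβ⟩)
  · push_neg at hle
    have hfβ'τ : f β' ≤ f τ := le_of_lt (lt_of_lt_of_le hle (hfσβ.trans hfβτ))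
    exact hβ'ne (hf2 τ hτK ⟨hβ'K, hτfacβ', hfβ'τ⟩ ⟨hβK', hτβ, hfβτ⟩)

theorem dm_crit_diag {β : dmI K} (hcrit : IsCritical K f β.1) :
    dmjb K f β = 0 ∧ dmjt K f β = 0 := by
  constructor
  · rw [dmjb, if_neg]
    rintro ⟨s, hs⟩
    exact absurd hs.2.2.2 (not_le.mpr (hcrit.2.2 s hs.2.1 hs.2.2.1))
  · rw [dmjt, if_neg]
    rintro ⟨t, ht⟩
    exact absurd ht.2.2.2 (not_le.mpr (hcrit.2.1 t ht.1 ht.2.2.1))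

theorem dm_noncrit_diag
    (hK1 : ∀ σ ∈ K, σ.Nonempty)
    (hK2 : ∀ σ ∈ K, ∀ τ, τ ⊆ σ → τ.Nonempty → τ ∈ K)
    (hf1 : ∀ β ∈ K, {γ | γ ∈ K ∧ IsFacet γ β ∧ f β ≤ f γ}.Subsingleton)
    (hf2 : ∀ β ∈ K, {α | α ∈ K ∧ IsFacet β α ∧ f α ≤ f β}.Subsingleton)
    {β : dmI K} (hcrit : ¬ IsCritical K f β.1) :
    dmjb K f β + dmjt K f β = 1 := by
  by_cases hb : ∃ s : Finset W, (β.1, s) ∈ gradVF K f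
  · have ht : ¬ ∃ t : Finset W, (t, β.1) ∈ gradVF K f := by
      rintro ⟨t, hts⟩
      obtain ⟨s, hs⟩ := hb
      exact dm_exclusion hK1 hK2 hf1 hf2 hs hts
    rw [dmjb, dmjt, if_pos hb, if_neg ht]
    norm_num
  · by_cases ht : ∃ t : Finset W, (t, β.1) ∈ gradVF K f
    · rw [dmjb, dmjt, if_neg hb, if_pos ht]
      norm_num
    · exfalso
      refine hcrit ⟨β.2, ?_, ?_⟩
      · intro τ hτK hτfac
        by_contra hlt
        push_neg at hlt
        exact ht ⟨τ, hτK, β.2, hτfac, hlt⟩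
      · intro s hsK hsfac
        by_contra hlt
        push_neg at hlt
        exact hb ⟨s, β.2, hsK, hsfac, hlt⟩

end More



section Alg
variable {W : Type*} [LinearOrder W] {K : Finset (Finset W)} {f : Finset W → ℝ}
set_option linter.unusedSectionVars false

theorem dm_P_pow (hf1 : ∀ β ∈ K, {γ | γ ∈ K ∧ IsFacet γ β ∧ f β ≤ f γ}.Subsingleton)
    (hf2 : ∀ β ∈ K, {α | α ∈ K ∧ IsFacet β α ∧ f α ≤ f β}.Subsingleton) :
    dmP K f ^ Fintype.card (dmI K) = 0 :=
  mat_nilpotent _ (fun t => f t.1) (fun _ _ h => dm_P_lt hf1 hf2 h)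

theorem dm_N_right (hf1 : ∀ β ∈ K, {γ | γ ∈ K ∧ IsFacet γ β ∧ f β ≤ f γ}.Subsingleton)
    (hf2 : ∀ β ∈ K, {α | α ∈ K ∧ IsFacet β α ∧ f α ≤ f β}.Subsingleton) :
    dmN K f = 1 + dmN K f * dmP K f := by
  have h := geom_sum_mul (dmP K f) (Fintype.card (dmI K))
  rw [dm_P_pow hf1 hf2] at h
  have h2 : dmN K f * (dmP K f - 1) = -1 := by rw [dmN, h]; noncomm_ring
  have h3 : dmN K f * dmP K f - dmN K f = -1 := by
    rw [← h2]; noncomm_ring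
  linear_combination (norm := noncomm_ring) -h3

theorem dm_N_left (hf1 : ∀ β ∈ K, {γ | γ ∈ K ∧ IsFacet γ β ∧ f β ≤ f γ}.Subsingleton)
    (hf2 : ∀ β ∈ K, {α | α ∈ K ∧ IsFacet β α ∧ f α ≤ f β}.Subsingleton) :
    dmN K f = 1 + dmP K f * dmN K f := by
  have h := mul_geom_sum (dmP K f) (Fintype.card (dmI K))
  rw [dm_P_pow hf1 hf2] at h
  have h2 : (dmP K f - 1) * dmN K f = -1 := by rw [dmN, h]; noncomm_ring
  have h3 : dmP K f * dmN K f - dmN K f = -1 := by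
    rw [← h2]; noncomm_ring
  linear_combination (norm := noncomm_ring) -h3

theorem dm_main_identity
    (hK1 : ∀ σ ∈ K, σ.Nonempty)
    (hK2 : ∀ σ ∈ K, ∀ τ, τ ⊆ σ → τ.Nonempty → τ ∈ K)
    (hf1 : ∀ β ∈ K, {γ | γ ∈ K ∧ IsFacet γ β ∧ f β ≤ f γ}.Subsingleton)
    (hf2 : ∀ β ∈ K, {α | α ∈ K ∧ IsFacet β α ∧ f α ≤ f β}.Subsingleton) :
    dmD K * dmN K f * (1 - dmJb K f - dmJt K f) * (dmD K * dmN K f)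
      = dmD K * dmN K f * dmW K f := by
  set D := dmD K
  set N := dmN K f
  set U := dmU K f
  set Wm := dmW K f
  set Jb := dmJb K f
  set Jt := dmJt K f
  set P := dmP K f with hPdef
  have hDD : D * D = 0 := dm_DD hK1 hK2
  have hN1 : N = 1 + N * P := dm_N_right hf1 hf2
  have hN2 : N = 1 + P * N := dm_N_left hf1 hf2
  have hWU : Wm * U = Jt := dm_WU hf1 hf2
  have hWJb : Wm * Jb = Wm := dm_WJb
  have hPUD : P = U * D + Jb := rfl
  have hPN : P * N = N - 1 := by conv_rhs => rw [hN2]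
                                 noncomm_ring
  have e1 : D * N * D = D * N * Jb * D := by
    calc D * N * D = D * (1 + N * P) * D := by rw [← hN1]
    _ = D * D + D * N * U * (D * D) + D * N * Jb * D := by rw [hPUD]; noncomm_ring
    _ = D * N * Jb * D := by rw [hDD]; noncomm_ring
  have e3 : U * D * N = N - 1 - Jb * N := by
    calc U * D * N = (P - Jb) * N := by rw [hPUD]; noncomm_ring
    _ = P * N - Jb * N := by noncomm_ring
    _ = N - 1 - Jb * N := by rw [hPN]
  have e4 : D * N * Jt * (D * N) = -(D * N * Wm) := by
    calc D * N * Jt * (D * N) = (D * N * Wm) * (U * D * N) := by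
          rw [← hWU]; noncomm_ring
    _ = (D * N * Wm) * (N - 1 - Jb * N) := by rw [e3]
    _ = D * N * (Wm * N) - D * N * Wm - D * N * ((Wm * Jb) * N) := by noncomm_ring
    _ = -(D * N * Wm) := by rw [hWJb]; noncomm_ring
  calc D * N * (1 - Jb - Jt) * (D * N)
      = (D * N * D) * N - (D * N * Jb * D) * N - D * N * Jt * (D * N) := by noncomm_ring
  _ = (D * N * Jb * D) * N - (D * N * Jb * D) * N - -(D * N * Wm) := by rw [e1, e4]
  _ = D * N * Wm := by noncomm_ring

theorem dm_W_col_crit {γ : dmI K} (hcrit : IsCritical K f γ.1) (s : dmI K) :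
    dmW K f s γ = 0 := by
  rw [dmW, if_neg]
  intro h
  exact absurd h.2.2.2 (not_le.mpr (hcrit.2.2 s.1 h.2.1 h.2.2.1))



end Alg

section Grading
variable {W : Type*} [LinearOrder W] {K : Finset (Finset W)} {f : Finset W → ℝ}
set_option linter.unusedSectionVars false

theorem dm_Ppow_card : ∀ (k : ℕ) (t t' : dmI K), (dmP K f ^ k) t t' ≠ 0 → t'.1.card = t.1.card := by
  intro k
  induction k with
  | zero =>
    intro t t' h
    by_cases he : t = t'
    · rw [he]
    · rw [pow_zero, Matrix.one_apply_ne he] at h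
      exact absurd rfl h
  | succ k ih =>
    intro t t' h
    rw [pow_succ, Matrix.mul_apply] at h
    obtain ⟨b, -, hb⟩ := Finset.exists_ne_zero_of_sum_ne_zero h
    have h1 : (dmP K f ^ k) t b ≠ 0 := fun h0 => hb (by rw [h0, zero_mul])
    have h2 : dmP K f b t' ≠ 0 := fun h0 => hb (by rw [h0, mul_zero])
    rw [dm_P_card h2, ih t b h1]

theorem dm_N_card {t t' : dmI K} (h : dmN K f t t' ≠ 0) : t'.1.card = t.1.card := by
  rw [dmN, Matrix.sum_apply] at h
  obtain ⟨k, -, hk⟩ := Finset.exists_ne_zero_of_sum_ne_zero h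
  exact dm_Ppow_card k t t' hk

theorem dm_DN_card {s t : dmI K} (h : (dmD K * dmN K f) s t ≠ 0) :
    t.1.card + 1 = s.1.card := by
  rw [Matrix.mul_apply] at h
  obtain ⟨b, -, hb⟩ := Finset.exists_ne_zero_of_sum_ne_zero h
  have h1 : dmD K s b ≠ 0 := fun h0 => hb (by rw [h0, zero_mul])
  have h2 : dmN K f b t ≠ 0 := fun h0 => hb (by rw [h0, mul_zero])
  have e1 := dm_D_card h1
  have e2 := dm_N_card h2
  omega


section FL
variable {W : Type*} [LinearOrder W] {K : Finset (Finset W)} {f : Finset W → ℝ}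
  {σ τ : Finset W}
set_option linter.unusedSectionVars false

theorem fl_sK (hσ : σ ∈ K) (F : Flowline1 W (gradVF K f) σ τ) :
    ∀ i, F.s i ∈ K ∧ (F.s i).card = σ.card := by
  intro i
  induction i using Fin.induction with
  | zero => rw [F.hs0]; exact ⟨hσ, rfl⟩
  | succ j ih =>
    have h1 := F.hV j
    have h2 : (F.t j.castSucc).card + 1 = (F.s j.succ).card := h1.2.2.1.2
    have h3 : (F.t j.castSucc).card + 1 = (F.s j.castSucc).card := (F.hfacet j.castSucc).2
    exact ⟨h1.2.1, by omega⟩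

theorem fl_tK (hσ : σ ∈ K)
    (hK2 : ∀ σ ∈ K, ∀ τ, τ ⊆ σ → τ.Nonempty → τ ∈ K)
    (hcard : 2 ≤ σ.card) (F : Flowline1 W (gradVF K f) σ τ) :
    ∀ i, F.t i ∈ K ∧ (F.t i).card + 1 = σ.card := by
  intro i
  have h1 := (F.hfacet i)
  have h2 := fl_sK hσ F i
  have h3 : (F.t i).card + 1 = σ.card := by
    have := h1.2; omega
  refine ⟨hK2 _ h2.1 _ h1.1 ?_, h3⟩
  rw [← Finset.card_pos]
  omega

theorem fl_dec (hσ : σ ∈ K)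
    (hf1 : ∀ β ∈ K, {γ | γ ∈ K ∧ IsFacet γ β ∧ f β ≤ f γ}.Subsingleton)
    (hK2 : ∀ σ ∈ K, ∀ τ, τ ⊆ σ → τ.Nonempty → τ ∈ K)
    (hcard : 2 ≤ σ.card) (F : Flowline1 W (gradVF K f) σ τ) :
    ∀ j : Fin F.r, f (F.t j.succ) < f (F.t j.castSucc) := by
  intro j
  have hV := F.hV j
  have hle : f (F.s j.succ) ≤ f (F.t j.castSucc) := hV.2.2.2
  have hlt : f (F.t j.succ) < f (F.s j.succ) := by
    by_contra h
    push_neg at h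
    have heq : F.t j.castSucc = F.t j.succ :=
      hf1 (F.s j.succ) hV.2.1 ⟨hV.1, hV.2.2.1, hV.2.2.2⟩
        ⟨(fl_tK hσ hK2 hcard F j.succ).1, F.hfacet j.succ, h⟩
    exact F.hne j heq.symm
  linarith

theorem fl_rlt (hσ : σ ∈ K)
    (hf1 : ∀ β ∈ K, {γ | γ ∈ K ∧ IsFacet γ β ∧ f β ≤ f γ}.Subsingleton)
    (hK2 : ∀ σ ∈ K, ∀ τ, τ ⊆ σ → τ.Nonempty → τ ∈ K)
    (hcard : 2 ≤ σ.card) (F : Flowline1 W (gradVF K f) σ τ) :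
    F.r + 1 ≤ Fintype.card (dmI K) := by
  have hanti : StrictAnti (fun i : Fin (F.r + 1) => f (F.t i)) :=
    Fin.strictAnti_iff_succ_lt.mpr (fl_dec hσ hf1 hK2 hcard F)
  let c : Fin (F.r + 1) → dmI K := fun i => ⟨F.t i, (fl_tK hσ hK2 hcard F i).1⟩
  have hinj : Function.Injective c := by
    intro i j hij
    have : f (F.t i) = f (F.t j) := by
      rw [show F.t i = F.t j from congrArg Subtype.val hij]
    exact hanti.injective this
  simpa using Fintype.card_le_of_injective c hinj

theorem fl_ext {V : Set (Finset W × Finset W)} {F G : Flowline1 W V σ τ}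
    (hr : F.r = G.r)
    (hs : ∀ i : Fin (F.r + 1), F.s i = G.s (Fin.cast (by rw [hr]) i))
    (ht : ∀ i : Fin (F.r + 1), F.t i = G.t (Fin.cast (by rw [hr]) i)) : F = G := by
  obtain ⟨r, s, t, hs0, htr, hfacet, hV, hne⟩ := F
  obtain ⟨r', s', t', hs0', htr', hfacet', hV', hne'⟩ := G
  dsimp at hr
  subst hr
  dsimp at hs ht
  have hseq : s = s' := funext fun i => by rw [hs i]
  have hteq : t = t' := funext fun i => by rw [ht i]
  subst hseq; subst hteq
  rfl

theorem fl_finite (hσ : σ ∈ K)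
    (hf1 : ∀ β ∈ K, {γ | γ ∈ K ∧ IsFacet γ β ∧ f β ≤ f γ}.Subsingleton)
    (hf2 : ∀ β ∈ K, {α | α ∈ K ∧ IsFacet β α ∧ f α ≤ f β}.Subsingleton)
    (hK2 : ∀ σ ∈ K, ∀ τ, τ ⊆ σ → τ.Nonempty → τ ∈ K)
    (hcard : 2 ≤ σ.card) :
    Finite (Flowline1 W (gradVF K f) σ τ) := by
  set n := Fintype.card (dmI K) with hn
  apply Finite.of_injective
    (f := fun F : Flowline1 W (gradVF K f) σ τ =>
      (⟨⟨F.r, by have := fl_rlt hσ hf1 hK2 hcard F; omega⟩,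
        fun i => (⟨F.t i, (fl_tK hσ hK2 hcard F i).1⟩ : dmI K)⟩ :
        Σ r : Fin n, (Fin (r.1 + 1) → dmI K)))
  intro F G h
  obtain ⟨r, s, t, hs0, htr, hfacet, hV, hne⟩ := F
  obtain ⟨r', s', t', hs0', htr', hfacet', hV', hne'⟩ := G
  simp only at h
  obtain ⟨h1, h2⟩ := Sigma.mk.inj_iff.mp h
  have hr : r = r' := congrArg Fin.val h1
  subst hr
  have h2' := eq_of_heq h2
  have hteq : t = t' := by
    funext i
    have := congr_fun h2' i
    exact congrArg Subtype.val this
  subst hteq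
  have hseq : s = s' := by
    funext i
    induction i using Fin.induction with
    | zero => rw [hs0, hs0']
    | succ j ih =>
      have hA := hV j
      have hB := hV' j
      exact hf2 _ hA.1 ⟨hA.2.1, hA.2.2.1, hA.2.2.2⟩ ⟨hB.2.1, hB.2.2.1, hB.2.2.2⟩
  subst hseq
  rfl

end FL

section PathSum
variable {W : Type*} [LinearOrder W] {K : Finset (Finset W)} {f : Finset W → ℝ}
set_option linter.unusedSectionVars false

noncomputable def wght (K : Finset (Finset W)) (f : Finset W → ℝ) (σ t : dmI K) (r : ℕ)
    (c : Fin (r + 1) → dmI K) : ℤ :=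
  dmD K σ (c 0) * (∏ i : Fin r, dmP K f (c i.castSucc) (c i.succ)) *
    (if c (Fin.last r) = t then 1 else 0)

theorem wght_sum (σ : dmI K) : ∀ (r : ℕ) (t : dmI K),
    ∑ c : Fin (r + 1) → dmI K, wght K f σ t r c = (dmD K * dmP K f ^ r) σ t := by
  intro r
  induction r with
  | zero =>
    intro t
    rw [pow_zero, mul_one]
    rw [← Equiv.sum_comp (Equiv.funUnique (Fin 1) (dmI K)).symm (wght K f σ t 0)]
    have h : ∀ x : dmI K, wght K f σ t 0 ((Equiv.funUnique (Fin 1) (dmI K)).symm x)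
        = if x = t then dmD K σ x else 0 := by
      intro x
      rw [wght]
      simp [mul_ite]
    rw [Finset.sum_congr rfl (fun x _ => h x), Finset.sum_ite_eq' Finset.univ t]
    simp
  | succ r ih =>
    intro t
    set e := Fin.snocEquiv (fun _ : Fin (r + 2) => dmI K) with hedef
    have hterm : ∀ (x : dmI K) (c : Fin (r + 1) → dmI K),
        wght K f σ t (r + 1) (e (x, c)) =
          (dmD K σ (c 0) * ∏ i : Fin r, dmP K f (c i.castSucc) (c i.succ)) *
            (dmP K f (c (Fin.last r)) x * if x = t then 1 else 0) := by
      intro x c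
      have he : e (x, c) = Fin.snoc c x := by simp [hedef, Fin.snocEquiv]
      rw [wght, he]
      have h0 : Fin.snoc (α := fun _ => dmI K) c x 0 = c 0 := by
        rw [show (0 : Fin (r + 2)) = Fin.castSucc 0 from rfl, Fin.snoc_castSucc]
      have hlast : Fin.snoc (α := fun _ => dmI K) c x (Fin.last (r + 1)) = x :=
        Fin.snoc_last _ _
      have hprod : (∏ i : Fin (r + 1), dmP K f (Fin.snoc (α := fun _ => dmI K) c x i.castSucc)
          (Fin.snoc (α := fun _ => dmI K) c x i.succ)) =
          (∏ i : Fin r, dmP K f (c i.castSucc) (c i.succ)) * dmP K f (c (Fin.last r)) x := by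
        rw [Fin.prod_univ_castSucc]
        simp only [Fin.succ_castSucc, Fin.snoc_castSucc, Fin.succ_last, Fin.snoc_last]
      rw [h0, hlast, hprod]
      ring
    have hcol : ∀ c : Fin (r + 1) → dmI K,
        (∑ x : dmI K, (dmD K σ (c 0) * ∏ i : Fin r, dmP K f (c i.castSucc) (c i.succ)) *
          (dmP K f (c (Fin.last r)) x * if x = t then 1 else 0))
        = (dmD K σ (c 0) * ∏ i : Fin r, dmP K f (c i.castSucc) (c i.succ)) *
            dmP K f (c (Fin.last r)) t := by
      intro c
      rw [← Finset.mul_sum]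
      congr 1
      have hx : ∀ x : dmI K, dmP K f (c (Fin.last r)) x * (if x = t then 1 else 0)
          = if x = t then dmP K f (c (Fin.last r)) x else 0 := by
        intro x
        by_cases h : x = t <;> simp [h]
      rw [Finset.sum_congr rfl fun x _ => hx x, Finset.sum_ite_eq' Finset.univ t]
      simp
    have hcollapse : ∀ c : Fin (r + 1) → dmI K,
        (∑ m : dmI K, wght K f σ m r c * dmP K f m t)
        = (dmD K σ (c 0) * ∏ i : Fin r, dmP K f (c i.castSucc) (c i.succ)) *
            dmP K f (c (Fin.last r)) t := by
      intro c
      have hm : ∀ m : dmI K, wght K f σ m r c * dmP K f m t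
          = if c (Fin.last r) = m then
              (dmD K σ (c 0) * ∏ i : Fin r, dmP K f (c i.castSucc) (c i.succ)) *
                dmP K f m t else 0 := by
        intro m
        rw [wght]
        by_cases h : c (Fin.last r) = m <;> simp [h]
      rw [Finset.sum_congr rfl fun m _ => hm m,
        Finset.sum_ite_eq Finset.univ (c (Fin.last r))]
      simp
    calc ∑ c : Fin (r + 1 + 1) → dmI K, wght K f σ t (r + 1) c
        = ∑ p : dmI K × (Fin (r + 1) → dmI K), wght K f σ t (r + 1) (e p) :=
          (Equiv.sum_comp e (wght K f σ t (r + 1))).symm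
      _ = ∑ x : dmI K, ∑ c : Fin (r + 1) → dmI K, wght K f σ t (r + 1) (e (x, c)) :=
          Fintype.sum_prod_type _
      _ = ∑ x : dmI K, ∑ c : Fin (r + 1) → dmI K,
            (dmD K σ (c 0) * ∏ i : Fin r, dmP K f (c i.castSucc) (c i.succ)) *
              (dmP K f (c (Fin.last r)) x * if x = t then 1 else 0) :=
          Finset.sum_congr rfl fun x _ => Finset.sum_congr rfl fun c _ => hterm x c
      _ = ∑ c : Fin (r + 1) → dmI K, ∑ x : dmI K,
            (dmD K σ (c 0) * ∏ i : Fin r, dmP K f (c i.castSucc) (c i.succ)) *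
              (dmP K f (c (Fin.last r)) x * if x = t then 1 else 0) := Finset.sum_comm
      _ = ∑ c : Fin (r + 1) → dmI K,
            (dmD K σ (c 0) * ∏ i : Fin r, dmP K f (c i.castSucc) (c i.succ)) *
              dmP K f (c (Fin.last r)) t := Finset.sum_congr rfl fun c _ => hcol c
      _ = ∑ c : Fin (r + 1) → dmI K, ∑ m : dmI K, wght K f σ m r c * dmP K f m t :=
          (Finset.sum_congr rfl fun c _ => (hcollapse c).symm)
      _ = ∑ m : dmI K, ∑ c : Fin (r + 1) → dmI K, wght K f σ m r c * dmP K f m t :=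
          Finset.sum_comm
      _ = ∑ m : dmI K, (dmD K * dmP K f ^ r) σ m * dmP K f m t := by
          refine Finset.sum_congr rfl fun m _ => ?_
          rw [← Finset.sum_mul, ih m]
      _ = (dmD K * dmP K f ^ (r + 1)) σ t := by
          rw [pow_succ, ← mul_assoc, Matrix.mul_apply]

end PathSum


section Corr
variable {W : Type*} [LinearOrder W] {K : Finset (Finset W)} {f : Finset W → ℝ}
set_option linter.unusedSectionVars false

/-- admissibility of a path of `p`-simplices -/
def good (K : Finset (Finset W)) (f : Finset W → ℝ) (σ t : dmI K) (r : ℕ)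
    (c : Fin (r + 1) → dmI K) : Prop :=
  IsFacet (c 0).1 σ.1 ∧ c (Fin.last r) = t ∧
    ∀ i : Fin r, ∃ s' : Finset W, ((c i.castSucc).1, s') ∈ gradVF K f ∧
      IsFacet (c i.succ).1 s' ∧ c i.succ ≠ c i.castSucc

theorem dm_P_struct (hf2 : ∀ β ∈ K, {α | α ∈ K ∧ IsFacet β α ∧ f α ≤ f β}.Subsingleton)
    {t t' : dmI K} (h : dmP K f t t' ≠ 0) :
    ∃ s' : Finset W, (t.1, s') ∈ gradVF K f ∧ IsFacet t'.1 s' ∧ t' ≠ t := by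
  have hne : t' ≠ t := by
    rintro rfl
    exact h (dm_P_diag hf2 t')
  have hUD : (dmU K f * dmD K) t t' ≠ 0 := by
    intro h0
    rw [dmP, Matrix.add_apply, h0, zero_add, dmJb,
      Matrix.diagonal_apply_ne _ (fun hh => hne hh.symm)] at h
    exact h rfl
  obtain ⟨s', h1, h2⟩ := dm_UD_struct hUD
  exact ⟨s', h1, h2, hne⟩

theorem wght_ne_zero_good (hf2 : ∀ β ∈ K, {α | α ∈ K ∧ IsFacet β α ∧ f α ≤ f β}.Subsingleton)
    (σ t : dmI K) (r : ℕ) (c : Fin (r + 1) → dmI K)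
    (h : wght K f σ t r c ≠ 0) : good K f σ t r c := by
  rw [wght] at h
  have h1 : dmD K σ (c 0) ≠ 0 := by
    intro h0; rw [h0] at h; simp at h
  have h2 : ∀ i : Fin r, dmP K f (c i.castSucc) (c i.succ) ≠ 0 := by
    intro i h0
    rw [Finset.prod_eq_zero (Finset.mem_univ i) h0] at h
    simp at h
  have h3 : c (Fin.last r) = t := by
    by_contra h0
    rw [if_neg h0] at h
    simp at h
  refine ⟨?_, h3, ?_⟩
  · by_contra h0
    rw [dmD, if_neg h0] at h1
    exact h1 rfl
  · intro i
    obtain ⟨s', hA, hB, hC⟩ := dm_P_struct hf2 (h2 i)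
    exact ⟨s', hA, hB, hC⟩

theorem theta1_eq_wght
    (hK2 : ∀ σ ∈ K, ∀ τ, τ ⊆ σ → τ.Nonempty → τ ∈ K)
    (hf2 : ∀ β ∈ K, {α | α ∈ K ∧ IsFacet β α ∧ f α ≤ f β}.Subsingleton)
    (σ t : dmI K) (hcard : 2 ≤ σ.1.card)
    (F : Flowline1 W (gradVF K f) σ.1 t.1) :
    theta1 F = wght K f σ t F.r (fun i => ⟨F.t i, (fl_tK σ.2 hK2 hcard F i).1⟩) := by
  set c : Fin (F.r + 1) → dmI K := fun i => ⟨F.t i, (fl_tK σ.2 hK2 hcard F i).1⟩ with hc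
  have h0 : dmD K σ (c 0) = arrowSign σ.1 (F.t 0) := by
    rw [dmD, if_pos]
    have h := F.hfacet 0
    rwa [F.hs0] at h
  have hstep : ∀ i : Fin F.r, dmP K f (c i.castSucc) (c i.succ)
      = -(arrowSign (F.s i.succ) (F.t i.castSucc) * arrowSign (F.s i.succ) (F.t i.succ)) :=
    fun i => dm_P_step hf2 (F.hV i) (F.hfacet i.succ)
      (fun h => F.hne i (congrArg Subtype.val h))
  have hlast : c (Fin.last F.r) = t := Subtype.ext F.htr
  rw [wght, if_pos hlast, mul_one, h0,
    Finset.prod_congr rfl (fun i _ => hstep i)]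
  rw [theta1, flowProd, Fin.prod_univ_succ, F.hs0]
  have hneg : ∀ i : Fin F.r,
      -(arrowSign (F.s i.succ) (F.t i.castSucc) * arrowSign (F.s i.succ) (F.t i.succ))
      = (-1) * (arrowSign (F.s i.succ) (F.t i.castSucc) * arrowSign (F.s i.succ) (F.t i.succ)) := by
    intro i; ring
  rw [Finset.prod_congr rfl (fun i _ => hneg i), Finset.prod_mul_distrib,
    Finset.prod_mul_distrib, Finset.prod_const, Finset.card_univ, Fintype.card_fin]
  ring

/-- build a flowline from an admissible path -/
noncomputable def mkFL (σ t : dmI K) (r : ℕ) (c : Fin (r + 1) → dmI K)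
    (hc : good K f σ t r c) : Flowline1 W (gradVF K f) σ.1 t.1 where
  r := r
  s := Fin.cases σ.1 (fun j => (hc.2.2 j).choose)
  t := fun i => (c i).1
  hs0 := by simp
  htr := congrArg Subtype.val hc.2.1
  hfacet := by
    intro i
    induction i using Fin.cases with
    | zero => simpa using hc.1
    | succ j => simpa using (hc.2.2 j).choose_spec.2.1
  hV := by
    intro j
    simpa using (hc.2.2 j).choose_spec.1
  hne := fun j h => (hc.2.2 j).choose_spec.2.2 (Subtype.ext h)

theorem fib_eq
    (hK2 : ∀ σ ∈ K, ∀ τ, τ ⊆ σ → τ.Nonempty → τ ∈ K)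
    (hf2 : ∀ β ∈ K, {α | α ∈ K ∧ IsFacet β α ∧ f α ≤ f β}.Subsingleton)
    (σ t : dmI K) (hcard : 2 ≤ σ.1.card)
    [Fintype (Flowline1 W (gradVF K f) σ.1 t.1)] (r : ℕ) :
    ∑ F ∈ Finset.univ.filter (fun F : Flowline1 W (gradVF K f) σ.1 t.1 => F.r = r),
      theta1 F
    = ∑ c ∈ Finset.univ.filter (good K f σ t r), wght K f σ t r c := by
  refine Finset.sum_bij'
    (i := fun (F : Flowline1 W (gradVF K f) σ.1 t.1)
      (hF : F ∈ Finset.univ.filter (fun F => F.r = r)) =>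
      fun j : Fin (r + 1) =>
        (⟨F.t (Fin.cast (by rw [(Finset.mem_filter.mp hF).2]) j),
          (fl_tK σ.2 hK2 hcard F _).1⟩ : dmI K))
    (j := fun c hc => mkFL σ t r c (Finset.mem_filter.mp hc).2)
    ?_ ?_ ?_ ?_ ?_
  · -- maps into good
    intro F hF
    have hFr : F.r = r := (Finset.mem_filter.mp hF).2
    subst hFr
    simp only [Finset.mem_filter, Finset.mem_univ, true_and]
    have hcast : ∀ j : Fin (F.r + 1), (Fin.cast (by rw [(Finset.mem_filter.mp hF).2]) j
        : Fin (F.r + 1)) = j := fun j => rfl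
    refine ⟨?_, ?_, ?_⟩
    · simp only [hcast]
      have h := F.hfacet 0
      rwa [F.hs0] at h
    · simp only [hcast]
      exact Subtype.ext F.htr
    · intro i
      simp only [hcast]
      exact ⟨F.s i.succ, F.hV i, F.hfacet i.succ,
        fun h => F.hne i (congrArg Subtype.val h)⟩
  · -- maps into fiber
    intro c hc
    simp only [Finset.mem_filter, Finset.mem_univ, true_and]
    rfl
  · -- left inverse
    intro F hF
    have hFr : F.r = r := (Finset.mem_filter.mp hF).2
    subst hFr
    refine fl_ext rfl ?_ ?_
    · intro i
      induction i using Fin.cases with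
      | zero => exact F.hs0.symm
      | succ j =>
        exact dm_top_unique hf2 (Flowline1.hV _ j) (F.hV j)
    · intro i
      rfl
  · -- right inverse
    intro c hc
    funext j
    exact Subtype.ext rfl
  · -- values
    intro F hF
    have hFr : F.r = r := (Finset.mem_filter.mp hF).2
    subst hFr
    exact theta1_eq_wght hK2 hf2 σ t hcard F

end Corr

theorem dm_M_eq
    (hK1 : ∀ σ ∈ K, σ.Nonempty)
    (hK2 : ∀ σ ∈ K, ∀ τ, τ ⊆ σ → τ.Nonempty → τ ∈ K)
    (hf1 : ∀ β ∈ K, {γ | γ ∈ K ∧ IsFacet γ β ∧ f β ≤ f γ}.Subsingleton)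
    (hf2 : ∀ β ∈ K, {α | α ∈ K ∧ IsFacet β α ∧ f α ≤ f β}.Subsingleton)
    (s t : dmI K) (hs : 2 ≤ s.1.card) :
    M (gradVF K f) s.1 t.1 = (dmD K * dmN K f) s t := by
  have hfin : Finite (Flowline1 W (gradVF K f) s.1 t.1) :=
    fl_finite s.2 hf1 hf2 hK2 hs
  letI : Fintype (Flowline1 W (gradVF K f) s.1 t.1) := Fintype.ofFinite _
  rw [M, finsum_eq_sum_of_fintype]
  have hmap : ∀ F ∈ (Finset.univ : Finset (Flowline1 W (gradVF K f) s.1 t.1)),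
      F.r ∈ Finset.range (Fintype.card (dmI K)) := by
    intro F _
    rw [Finset.mem_range]
    have h := fl_rlt s.2 hf1 hK2 hs F
    omega
  rw [← Finset.sum_fiberwise_of_maps_to hmap theta1]
  have hfib : ∀ r : ℕ,
      (∑ F ∈ Finset.univ.filter
        (fun F : Flowline1 W (gradVF K f) s.1 t.1 => F.r = r), theta1 F)
      = (dmD K * dmP K f ^ r) s t := by
    intro r
    rw [fib_eq hK2 hf2 s t hs r]
    rw [Finset.sum_subset (Finset.filter_subset (good K f s t r) Finset.univ)
      (fun c _ hcg => by
        by_contra h0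
        exact hcg (Finset.mem_filter.mpr ⟨Finset.mem_univ _,
          wght_ne_zero_good hf2 s t r c h0⟩))]
    exact wght_sum s r t
  rw [Finset.sum_congr rfl fun r _ => hfib r, dmN, Finset.mul_sum, Matrix.sum_apply]

end Grading

end DMproof

open scoped Classical in
/-- Let `K` be a finite abstract simplicial complex with discrete Morse function `f` and
gradient vector field `V`, and let `α` and `γ` be critical simplices of `K` of dimensions
`p+1` and `p−1`.  Then `∑_β #M(α, β) · #M(β, γ) = 0`, the sum running over all critical
`p`-simplices `β` of `K`: the discrete Morse differential squares to zero,
`⟨∂̃²(α), γ⟩ = 0`. -/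
theorem stmt_12 {W : Type*} [LinearOrder W] (K : Finset (Finset W))
    (hK1 : ∀ σ ∈ K, σ.Nonempty)
    (hK2 : ∀ σ ∈ K, ∀ τ, τ ⊆ σ → τ.Nonempty → τ ∈ K)
    (f : Finset W → ℝ)
    (hf1 : ∀ β ∈ K, {γ | γ ∈ K ∧ IsFacet γ β ∧ f β ≤ f γ}.Subsingleton)
    (hf2 : ∀ β ∈ K, {α | α ∈ K ∧ IsFacet β α ∧ f α ≤ f β}.Subsingleton)
    (V : Set (Finset W × Finset W)) (hV : V = gradVF K f)
    (p : ℕ) (α γ : Finset W)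
    (hα : IsCritical K f α) (hγ : IsCritical K f γ)
    (hαd : α.card = p + 2) (hγd : γ.card = p) :
    ∑ β ∈ K.filter (fun β => β.card = p + 1 ∧ IsCritical K f β),
      M V α β * M V β γ = 0 := by
  subst hV
  have hp : 1 ≤ p := by
    have h1 := Finset.card_pos.mpr (hK1 γ hγ.1)
    omega
  set a : dmI K := ⟨α, hα.1⟩ with ha
  set g : dmI K := ⟨γ, hγ.1⟩ with hg
  set DN := dmD K * dmN K f with hDN
  set cfun : dmI K → ℤ := fun b => (1 : ℤ) - dmjb K f b - dmjt K f b with hcfun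
  -- step 1 : rewrite the sum over the subtype
  have step1 : ∑ β ∈ K.filter (fun β => β.card = p + 1 ∧ IsCritical K f β),
      M (gradVF K f) α β * M (gradVF K f) β γ
      = ∑ b ∈ Finset.univ.filter (fun b : dmI K => b.1.card = p + 1 ∧ IsCritical K f b.1),
          DN a b * DN b g := by
    refine Finset.sum_bij' (fun β hβ => (⟨β, (Finset.mem_filter.mp hβ).1⟩ : dmI K))
      (fun b _ => b.1) ?_ ?_ ?_ ?_ ?_
    · intro β hβ
      simp only [Finset.mem_filter, Finset.mem_univ, true_and]
      exact (Finset.mem_filter.mp hβ).2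
    · intro b hb
      simp only [Finset.mem_filter] at hb ⊢
      exact ⟨b.2, hb.2⟩
    · intro β hβ
      rfl
    · intro b hb
      rfl
    · intro β hβ
      have hβK := (Finset.mem_filter.mp hβ).1
      have hβcard := (Finset.mem_filter.mp hβ).2.1
      have hβcrit := (Finset.mem_filter.mp hβ).2.2
      have h1 : M (gradVF K f) α β = DN a ⟨β, hβK⟩ := by
        rw [hDN]
        exact dm_M_eq hK1 hK2 hf1 hf2 a ⟨β, hβK⟩ (by rw [ha]; simp only; omega)
      have h2 : M (gradVF K f) β γ = DN (⟨β, hβK⟩ : dmI K) g := by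
        rw [hDN]
        exact dm_M_eq hK1 hK2 hf1 hf2 ⟨β, hβK⟩ g (by simp only; omega)
      rw [h1, h2]
  rw [step1]
  -- step 2 : extend to the full sum with the critical projector
  have vanish : ∀ b ∈ (Finset.univ : Finset (dmI K)),
      b ∉ Finset.univ.filter (fun b : dmI K => b.1.card = p + 1 ∧ IsCritical K f b.1) →
      DN a b * cfun b * DN b g = 0 := by
    intro b _ hb
    simp only [Finset.mem_filter, Finset.mem_univ, true_and, not_and] at hb
    by_cases hbcrit : IsCritical K f b.1
    · by_cases hbcard : b.1.card = p + 1
      · exact absurd hbcrit (hb hbcard)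
      · have h0 : DN a b = 0 := by
          by_contra h0
          have hcd := dm_DN_card (K := K) (f := f) (s := a) (t := b)
            (by rw [hDN] at h0; exact h0)
          rw [ha] at hcd
          simp only at hcd
          omega
        simp only [h0, zero_mul]
    · have hc : cfun b = 0 := by
        have hnc := dm_noncrit_diag hK1 hK2 hf1 hf2 hbcrit
        show (1 : ℤ) - dmjb K f b - dmjt K f b = 0
        omega
      rw [hc, mul_zero, zero_mul]
  have step2 : ∑ b ∈ Finset.univ.filter (fun b : dmI K => b.1.card = p + 1 ∧ IsCritical K f b.1),
      DN a b * DN b g = ∑ b : dmI K, DN a b * cfun b * DN b g := by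
    rw [← Finset.sum_subset (Finset.filter_subset _ Finset.univ) vanish]
    refine Finset.sum_congr rfl fun b hb => ?_
    have hbcrit : IsCritical K f b.1 := (Finset.mem_filter.mp hb).2.2
    have hc : cfun b = 1 := by
      obtain ⟨e1, e2⟩ := dm_crit_diag (K := K) (f := f) hbcrit
      show (1 : ℤ) - dmjb K f b - dmjt K f b = 1
      rw [e1, e2]
      ring
    rw [hc, mul_one]
  rw [step2]
  -- step 3 : the matrix identity
  have hdiag : (1 : Matrix (dmI K) (dmI K) ℤ) - dmJb K f - dmJt K f
      = Matrix.diagonal cfun := by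
    rw [dmJb, dmJt, ← Matrix.diagonal_one, Matrix.diagonal_sub, Matrix.diagonal_sub]
  have step3 : ∑ b : dmI K, DN a b * cfun b * DN b g
      = (dmD K * dmN K f * (1 - dmJb K f - dmJt K f) * (dmD K * dmN K f)) a g := by
    rw [hdiag, ← hDN, Matrix.mul_apply]
    refine Finset.sum_congr rfl fun b _ => ?_
    rw [Matrix.mul_diagonal]
  rw [step3, dm_main_identity hK1 hK2 hf1 hf2, Matrix.mul_apply]
  refine Finset.sum_eq_zero fun b _ => ?_
  rw [dm_W_col_crit (by rw [hg]; exact hγ) b, mul_zero]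
end

section
/- Let l be a nonempty list with entries in {−1, +1} (the dimension changes along the steps of a path: −1 is a downward step, +1 an upward step) such that: the first and last entries are −1, the sum of all entries equals −2, no two consecutive entries are both +1, and every partial sum of l is ≥ −2. Then there is exactly one index i such that the entries of l at positions i and i+1 are both −1. In other words, a flowline of index 2 has a unique double drop in dimension, so its intermediate simplex is well defined. -/
/-- Count of adjacent double drops (`-1, -1`) in a list. -/
def dd : List ℤ → ℕ
  | a :: b :: t => (if a = -1 ∧ b = -1 then 1 else 0) + dd (b :: t)
  | _ => 0

lemma dd_zero (l : List ℤ) (h : dd l = 0) :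
    ∀ i : ℕ, ¬ (l[i]? = some (-1) ∧ l[i + 1]? = some (-1)) := by
  induction l with
  | nil => intro i hi; simp at hi
  | cons a t ih =>
    intro i hi
    match t with
    | [] =>
      rcases hi with ⟨-, h2⟩
      simp at h2
    | b :: t' =>
      by_cases hab : a = -1 ∧ b = -1
      · rw [dd] at h; simp [hab] at h
      · rw [dd] at h
        simp only [if_neg hab] at h
        cases i with
        | zero =>
          rcases hi with ⟨h1, h2⟩
          simp at h1 h2
          exact hab ⟨h1, h2⟩
        | succ k =>
          rcases hi with ⟨h1, h2⟩
          refine ih (by omega) k ⟨?_, ?_⟩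
          · simpa using h1
          · simpa using h2

lemma dd_pos (l : List ℤ) (h : dd l ≠ 0) :
    ∃ i : ℕ, l[i]? = some (-1) ∧ l[i + 1]? = some (-1) := by
  induction l with
  | nil => simp [dd] at h
  | cons a t ih =>
    match t with
    | [] => simp [dd] at h
    | b :: t' =>
      by_cases hab : a = -1 ∧ b = -1
      · exact ⟨0, by simp [hab.1], by simp [hab.2]⟩
      · rw [dd] at h
        simp only [if_neg hab] at h
        obtain ⟨i, hi1, hi2⟩ := ih (by omega)
        exact ⟨i + 1, by simpa using hi1, by simpa using hi2⟩

lemma dd_one (l : List ℤ) (h : dd l = 1) :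
    ∀ i j : ℕ, (l[i]? = some (-1) ∧ l[i + 1]? = some (-1)) →
      (l[j]? = some (-1) ∧ l[j + 1]? = some (-1)) → i = j := by
  induction l with
  | nil => intro i j hi _; simp at hi
  | cons a t ih =>
    intro i j hi hj
    match t with
    | [] => rcases hi with ⟨-, h2⟩; simp at h2
    | b :: t' =>
      by_cases hab : a = -1 ∧ b = -1
      · rw [dd] at h
        simp only [if_pos hab] at h
        have ht0 : dd (b :: t') = 0 := by omega
        have hz := dd_zero (b :: t') ht0
        have key : ∀ k : ℕ, ((a :: b :: t')[k]? = some (-1) ∧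
            (a :: b :: t')[k + 1]? = some (-1)) → k = 0 := by
          intro k hk
          cases k with
          | zero => rfl
          | succ m =>
            rcases hk with ⟨h1, h2⟩
            exact absurd ⟨by simpa using h1, by simpa using h2⟩ (hz m)
        rw [key i hi, key j hj]
      · rw [dd] at h
        simp only [if_neg hab] at h
        cases i with
        | zero =>
          rcases hi with ⟨h1, h2⟩
          simp at h1 h2
          exact absurd ⟨h1, h2⟩ hab
        | succ k =>
          cases j with
          | zero =>
            rcases hj with ⟨h1, h2⟩
            simp at h1 h2
            exact absurd ⟨h1, h2⟩ hab
          | succ m =>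
            rcases hi with ⟨hi1, hi2⟩
            rcases hj with ⟨hj1, hj2⟩
            exact congrArg Nat.succ (ih (by omega) k m
              ⟨by simpa using hi1, by simpa using hi2⟩
              ⟨by simpa using hj1, by simpa using hj2⟩)

lemma dd_count : ∀ (n : ℕ) (l : List ℤ), l.length ≤ n →
    l.head? = some (-1) → l.getLast? = some (-1) →
    (∀ x ∈ l, x = -1 ∨ x = 1) →
    (∀ i : ℕ, ¬ (l[i]? = some 1 ∧ l[i + 1]? = some 1)) →
    dd l + 2 * l.count 1 + 1 = l.length := by
  intro n
  induction n with
  | zero =>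
    intro l hl hh _ _ _
    rw [List.length_eq_zero_iff.mp (Nat.le_zero.mp hl)] at hh
    simp at hh
  | succ n ih =>
    intro l hl hh hla hmem hup
    match l with
    | [] => simp at hh
    | [a] =>
      have ha : a = -1 := by simpa using hh
      subst ha
      simp [dd, List.count_cons]
    | a :: b :: t =>
      have ha : a = -1 := by simpa using hh
      subst ha
      rcases hmem b (by simp) with hb | hb
      · -- b = -1
        subst hb
        have hIH := ih (-1 :: t) (by simpa using Nat.le_of_succ_le_succ hl)
          (by simp) (by rwa [List.getLast?_cons_cons] at hla)
          (fun x hx => hmem x (by simp at hx ⊢; tauto))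
          (fun i => by
            have := hup (i + 1)
            simpa using this)
        have hdd : dd (-1 :: -1 :: t) = 1 + dd (-1 :: t) := by
          rw [dd]; simp
        have hcnt : (-1 :: -1 :: t : List ℤ).count 1 = (-1 :: t : List ℤ).count 1 := by
          simp [List.count_cons]
        rw [hdd, hcnt]
        simp only [List.length_cons] at hIH ⊢
        omega
      · -- b = 1
        subst hb
        match t with
        | [] => simp at hla
        | c :: t' =>
          have hc : c = -1 := by
            rcases hmem c (by simp) with h | h
            · exact h
            · exfalso
              exact hup 1 ⟨by simp, by simp [h]⟩
          subst hc
          have hIH := ih (-1 :: t') (by simp at hl ⊢; omega)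
            (by simp)
            (by rw [List.getLast?_cons_cons, List.getLast?_cons_cons] at hla; exact hla)
            (fun x hx => hmem x (by simp at hx ⊢; tauto))
            (fun i => by
              have := hup (i + 2)
              simpa using this)
          have hdd : dd (-1 :: 1 :: -1 :: t') = dd (-1 :: t') := by
            rw [dd, dd]
            norm_num
          have hcnt : (-1 :: 1 :: -1 :: t' : List ℤ).count 1
              = (-1 :: t' : List ℤ).count 1 + 1 := by
            simp [List.count_cons]
          rw [hdd, hcnt]
          simp only [List.length_cons] at hIH ⊢
          omega

lemma sum_count (l : List ℤ) (hpm : ∀ x ∈ l, x = -1 ∨ x = 1) :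
    l.sum = (l.count 1 : ℤ) - l.count (-1) ∧ l.count 1 + l.count (-1) = l.length := by
  induction l with
  | nil => simp
  | cons a t ih =>
    obtain ⟨h1, h2⟩ := ih (fun x hx => hpm x (by simp [hx]))
    rcases hpm a (by simp) with h | h <;> subst h <;>
      simp [List.count_cons, List.sum_cons] <;> omega

/-- **Uniqueness of the double drop.**
Let `l` be a nonempty list with entries in `{−1, +1}` (the dimension changes along the
steps of an index-2 flowline: `−1` is a downward step, `+1` an upward step) such that: the
first and last entries are `−1`, the sum of all entries equals `−2`, no two consecutive
entries are both `+1`, and every partial sum of `l` is `≥ −2`.  Then there is exactly one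
index `i` such that the entries of `l` at positions `i` and `i+1` are both `−1`: a flowline
of index 2 has a unique double drop in dimension, so its intermediate simplex is well
defined. -/
theorem stmt_14 (l : List ℤ) (hne : l ≠ [])
    (hpm : ∀ x ∈ l, x = -1 ∨ x = 1)
    (hfirst : l.head? = some (-1))
    (hlast : l.getLast? = some (-1))
    (hsum : l.sum = -2)
    (hnoupup : ∀ i : ℕ, ¬ (l[i]? = some 1 ∧ l[i + 1]? = some 1))
    (hpartial : ∀ i : ℕ, -2 ≤ (l.take i).sum) :
    ∃! i : ℕ, l[i]? = some (-1) ∧ l[i + 1]? = some (-1) := by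
  have hc := dd_count l.length l le_rfl hfirst hlast hpm hnoupup
  obtain ⟨hs, hl⟩ := sum_count l hpm
  have hdd1 : dd l = 1 := by
    rw [hsum] at hs
    omega
  obtain ⟨i, hi⟩ := dd_pos l (by omega)
  exact ⟨i, hi, fun j hj => dd_one l hdd1 j i hj hi⟩
end
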